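/- arXiv:1308.6250 — 11 statements merged into one kernel-verified Lean document; each statement's English description precedes it below -/
import Mathlib

section
/- Let k > 0, V > 0, and 0 < r_d ≤ r_a be real numbers. If r_a satisfies the circular-motion equilibrium equation V/r_a = 2·k·r_a·V·√(1 − r_d²/r_a²), then r_a = √((r_d² + √(r_d⁴ + 1/k²))/2). -/
/-!
Cancelling `V` and squaring turns the orbit condition into the quadratic
`x ^ 2 - r_d ^ 2 * x = 1 / (4 * k ^ 2)` in `x = r_a ^ 2`, and `r_d ≤ r_a` selects its larger root.
-/

open Real

theorem eq_half_add_sqrt_of_sq_sub_mul_eq {x b c : ℝ} (h : x ^ 2 - b * x = c) (hx : b ≤ 2 * x) :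
    x = (b + √(b ^ 2 + 4 * c)) / 2 := by
  have hdisc : b ^ 2 + 4 * c = (2 * x - b) ^ 2 := by rw [← h]; ring
  rw [hdisc, sqrt_sq (by linarith)]
  ring

theorem mul_sq_mul_sqrt_eq_one_of_orbit_eq {k V d r : ℝ} (hV : V ≠ 0) (hr : r ≠ 0)
    (h : V / r = 2 * k * r * V * √(1 - d ^ 2 / r ^ 2)) :
    2 * k * r ^ 2 * √(1 - d ^ 2 / r ^ 2) = 1 := by
  rw [div_eq_iff hr] at h
  apply mul_left_cancel₀ hV
  linear_combination -h

theorem sq_sq_sub_mul_sq_eq_of_orbit_eq {k V d r : ℝ} (hV : V ≠ 0) (hr : r ≠ 0)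
    (h : V / r = 2 * k * r * V * √(1 - d ^ 2 / r ^ 2)) :
    (r ^ 2) ^ 2 - d ^ 2 * r ^ 2 = 1 / (4 * k ^ 2) := by
  have hone := mul_sq_mul_sqrt_eq_one_of_orbit_eq hV hr h
  have hk : k ≠ 0 := by rintro rfl; simp at hone
  -- The square root cannot vanish, so its radicand is positive and squaring loses nothing.
  have hpos : 0 < 1 - d ^ 2 / r ^ 2 :=
    sqrt_pos.mp ((sqrt_nonneg _).lt_of_ne fun h0 ↦ by simp [← h0] at hone)
  have hsq : (2 * k * r ^ 2) ^ 2 * (1 - d ^ 2 / r ^ 2) = 1 := by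
    rw [← sq_sqrt hpos.le, ← mul_pow, hone, one_pow]
  field_simp at hsq ⊢
  linear_combination hsq

theorem stable_orbit_radius_formula_general (k V r_d r_a : ℝ)
    (hV : 0 < V) (hrd : 0 < r_d) (hle : r_d ≤ r_a)
    (heq : V / r_a = 2 * k * r_a * V * Real.sqrt (1 - r_d ^ 2 / r_a ^ 2)) :
    r_a = Real.sqrt ((r_d ^ 2 + Real.sqrt (r_d ^ 4 + 1 / k ^ 2)) / 2) := by
  have hra : 0 < r_a := hrd.trans_le hle
  have hroot := eq_half_add_sqrt_of_sq_sub_mul_eq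
    (sq_sq_sub_mul_sq_eq_of_orbit_eq hV.ne' hra.ne' heq) (by nlinarith)
  rw [← sqrt_sq hra.le, hroot]
  congr 4
  ring

theorem stable_orbit_radius_formula (k V r_d r_a : ℝ)
    (hk : 0 < k) (hV : 0 < V) (hrd : 0 < r_d) (hle : r_d ≤ r_a)
    (heq : V / r_a = 2 * k * r_a * V * Real.sqrt (1 - r_d ^ 2 / r_a ^ 2)) :
    r_a = Real.sqrt ((r_d ^ 2 + Real.sqrt (r_d ^ 4 + 1 / k ^ 2)) / 2) :=
  stable_orbit_radius_formula_general k V r_d r_a hV hrd hle heq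
end

section
/- Let k > 0 and r_d > 0 be real numbers, and define r_a := √((r_d² + √(r_d⁴ + 1/k²))/2). Then r_a > r_d and r_a satisfies 1/r_a = 2·k·r_a·√(1 − r_d²/r_a²). -/
open Real

theorem stable_orbit_radius_properties (k r_d : ℝ) (hk : 0 < k) (hrd : 0 < r_d) :
    let r_a := Real.sqrt ((r_d ^ 2 + Real.sqrt (r_d ^ 4 + 1 / k ^ 2)) / 2)
    r_d < r_a ∧ 1 / r_a = 2 * k * r_a * Real.sqrt (1 - r_d ^ 2 / r_a ^ 2) := by
  intro r_a
  set s := Real.sqrt (r_d ^ 4 + 1 / k ^ 2) with hs_def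
  have hs2 : s ^ 2 = r_d ^ 4 + 1 / k ^ 2 := Real.sq_sqrt (by positivity)
  have hs_pos : 0 < s := Real.sqrt_pos.mpr (by positivity)
  have hgt : r_d ^ 2 < s := by nlinarith [sq_nonneg (s - r_d ^ 2), sq_nonneg (1/k), pow_pos hk 2, one_div_pos.mpr (pow_pos hk 2)]
  have hra2 : r_a ^ 2 = (r_d ^ 2 + s) / 2 := Real.sq_sqrt (by positivity)
  have hra_pos : 0 < r_a := Real.sqrt_pos.mpr (by positivity)
  have hlt : r_d < r_a := by nlinarith
  refine ⟨hlt, ?_⟩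
  have ht : (0:ℝ) ≤ 1 - r_d ^ 2 / r_a ^ 2 := by
    rw [sub_nonneg, div_le_one (by positivity)]; nlinarith
  have hsq : Real.sqrt (1 - r_d ^ 2 / r_a ^ 2) ^ 2 = 1 - r_d ^ 2 / r_a ^ 2 :=
    Real.sq_sqrt ht
  have hrhs_nonneg : 0 ≤ 2 * k * r_a * Real.sqrt (1 - r_d ^ 2 / r_a ^ 2) := by positivity
  have heq : (1 / r_a) ^ 2 = (2 * k * r_a * Real.sqrt (1 - r_d ^ 2 / r_a ^ 2)) ^ 2 := by
    rw [mul_pow, hsq]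
    have hs2' : k ^ 2 * s ^ 2 = k ^ 2 * r_d ^ 4 + 1 := by
      rw [hs2]; field_simp
    field_simp
    linear_combination -((4 * k ^ 2 * r_a ^ 2 + 2 * k ^ 2 * (s - r_d ^ 2)) * hra2 + hs2')
  calc 1 / r_a = Real.sqrt ((1 / r_a) ^ 2) := by
        rw [Real.sqrt_sq (by positivity)]
    _ = Real.sqrt ((2 * k * r_a * Real.sqrt (1 - r_d ^ 2 / r_a ^ 2)) ^ 2) := by rw [heq]
    _ = _ := Real.sqrt_sq hrhs_nonneg
end

section
/- Let r_d > 0 and k > 1/(2·r_d²) be real numbers, and define r̃_d := r_d·√(1 − 1/(4·k²·r_d⁴)). Then 0 < r̃_d < r_d and √((r̃_d² + √(r̃_d⁴ + 1/k²))/2) = r_d, i.e., replacing the commanded radius r_d by r̃_d in the smooth control law makes the resulting stable orbit radius exactly equal to r_d. -/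
open Real

theorem corrected_commanded_radius (k r_d : ℝ) (hrd : 0 < r_d)
    (hk : 1 / (2 * r_d ^ 2) < k) :
    let r_td := r_d * Real.sqrt (1 - 1 / (4 * k ^ 2 * r_d ^ 4))
    0 < r_td ∧ r_td < r_d ∧
      Real.sqrt ((r_td ^ 2 + Real.sqrt (r_td ^ 4 + 1 / k ^ 2)) / 2) = r_d := by
  intro r_td
  have hk0 : 0 < k := lt_trans (by positivity) hk
  have h2 : 1 < 2 * k * r_d ^ 2 := by
    rw [div_lt_iff₀ (by positivity)] at hk; nlinarith
  have h4 : 1 < 4 * k ^ 2 * r_d ^ 4 := by nlinarith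
  have hx : 0 < 1 - 1 / (4 * k ^ 2 * r_d ^ 4) := by
    have : 1 / (4 * k ^ 2 * r_d ^ 4) < 1 := by
      rw [div_lt_one (by positivity)]; exact h4
    linarith
  have hx1 : 1 - 1 / (4 * k ^ 2 * r_d ^ 4) < 1 := by
    have : 0 < 1 / (4 * k ^ 2 * r_d ^ 4) := by positivity
    linarith
  have hs0 : 0 < Real.sqrt (1 - 1 / (4 * k ^ 2 * r_d ^ 4)) := Real.sqrt_pos.mpr hx
  have hs1 : Real.sqrt (1 - 1 / (4 * k ^ 2 * r_d ^ 4)) < 1 := by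
    have h := Real.sqrt_lt_sqrt hx.le hx1
    rwa [Real.sqrt_one] at h
  have hpos : 0 < r_td := mul_pos hrd hs0
  have hlt : r_td < r_d := by
    calc r_td < r_d * 1 := by exact mul_lt_mul_of_pos_left hs1 hrd
    _ = r_d := by ring
  refine ⟨hpos, hlt, ?_⟩
  have hsq : r_td ^ 2 = r_d ^ 2 - 1 / (4 * k ^ 2 * r_d ^ 2) := by
    show (r_d * Real.sqrt _) ^ 2 = _
    rw [mul_pow, Real.sq_sqrt hx.le]
    field_simp
  have hinner : r_td ^ 4 + 1 / k ^ 2 = (r_d ^ 2 + 1 / (4 * k ^ 2 * r_d ^ 2)) ^ 2 := by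
    have : r_td ^ 4 = (r_td ^ 2) ^ 2 := by ring
    rw [this, hsq]
    field_simp
    ring
  rw [hinner, Real.sqrt_sq (by positivity), hsq]
  rw [show (r_d ^ 2 - 1 / (4 * k ^ 2 * r_d ^ 2) + (r_d ^ 2 + 1 / (4 * k ^ 2 * r_d ^ 2))) / 2 = r_d ^ 2 by ring]
  exact Real.sqrt_sq hrd.le
end

section
/- Let V be a real number, T a point of ℝ², and p : ℝ → ℝ², ψ : ℝ → ℝ differentiable at t with p'(t) = V·(cos ψ(t), sin ψ(t)), ψ'(t) = ω, and p(t) ≠ T on a neighborhood of t. Define the unit heading u(s) = (cos ψ(s), sin ψ(s)), the unit reference direction e(s) = (T − p(s))/‖T − p(s)‖, the bearing cosine c(s) = ⟨u(s), e(s)⟩, and the bearing sine s̃(s) = e₁(s)·u₂(s) − e₂(s)·u₁(s). Then c is differentiable at t with c'(t) = −s̃(t)·(ω + V·s̃(t)/‖p(t) − T‖). (This is the coordinate form of the bearing-angle dynamics θ_b' = ω + V·sin θ_b / r.) -/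
open Real RealInnerProductSpace

noncomputable def vec2 (a b : ℝ) : EuclideanSpace ℝ (Fin 2) :=
  (EuclideanSpace.equiv (Fin 2) ℝ).symm ![a, b]

/-!
With `w = T - p` and `e = ‖w‖⁻¹ • w`, the derivative of `⟪u, e⟫` is `⟪u', e⟫ + ⟪u, e'⟫`, where
`e' = (w' - ⟪e, w'⟫ • e) / ‖w‖` is the part of `w'` orthogonal to `e`, scaled by `1 / ‖w‖`.
The heading turns at rate `ω`, so `⟪u', e⟫ = -ω sin θ_b`; and `w' = -V u` gives
`⟪u, e'⟫ = -V (1 - cos² θ_b) / ‖w‖ = -V sin² θ_b / ‖w‖`.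
-/

@[simp]
lemma vec2_apply_zero (a b : ℝ) : vec2 a b 0 = a := by simp [vec2]

@[simp]
lemma vec2_apply_one (a b : ℝ) : vec2 a b 1 = b := by simp [vec2]

lemma inner_vec2_left (a b : ℝ) (x : EuclideanSpace ℝ (Fin 2)) :
    ⟪vec2 a b, x⟫ = a * x 0 + b * x 1 := by
  simp [PiLp.inner_apply, Fin.sum_univ_two, mul_comm]

lemma norm_vec2_cos_sin (θ : ℝ) : ‖vec2 (cos θ) (sin θ)‖ = 1 := by
  simp [EuclideanSpace.norm_eq, Fin.sum_univ_two]

lemma hasDerivAt_vec2 {f g : ℝ → ℝ} {f' g' t : ℝ} (hf : HasDerivAt f f' t)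
    (hg : HasDerivAt g g' t) : HasDerivAt (fun s => vec2 (f s) (g s)) (vec2 f' g') t := by
  have hsplit : ∀ a b, vec2 a b = a • vec2 1 0 + b • vec2 0 1 := fun a b => by
    ext i; fin_cases i <;> simp
  rw [funext fun s => hsplit (f s) (g s), hsplit f' g']
  exact (hf.smul_const _).add (hg.smul_const _)

lemma inner_sq_add_cross_sq (x y : EuclideanSpace ℝ (Fin 2)) :
    ⟪x, y⟫ ^ 2 + (x 0 * y 1 - x 1 * y 0) ^ 2 = ‖x‖ ^ 2 * ‖y‖ ^ 2 := by
  simp only [EuclideanSpace.norm_sq_eq, PiLp.inner_apply, Fin.sum_univ_two, Real.norm_eq_abs,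
    sq_abs, RCLike.inner_apply, conj_trivial]
  ring

section

variable {E : Type*} [NormedAddCommGroup E] [InnerProductSpace ℝ E] {u w : ℝ → E} {u' w' : E}
  {t : ℝ}

lemma HasDerivAt.norm (hw : HasDerivAt w w' t) (h0 : w t ≠ 0) :
    HasDerivAt (fun s => ‖w s‖) (⟪w t, w'⟫ / ‖w t‖) t := by
  have hpos : 0 < ‖w t‖ := norm_pos_iff.mpr h0
  have := hw.norm_sq.sqrt (by positivity)
  simp only [sqrt_sq (norm_nonneg _)] at this
  convert this using 1
  field_simp

lemma HasDerivAt.inner_smul_inv_norm (hu : HasDerivAt u u' t) (hw : HasDerivAt w w' t)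
    (h0 : w t ≠ 0) :
    HasDerivAt (fun s => ⟪u s, ‖w s‖⁻¹ • w s⟫)
      (⟪u', ‖w t‖⁻¹ • w t⟫ + (⟪u t, w'⟫ - ⟪u t, ‖w t‖⁻¹ • w t⟫ * ⟪‖w t‖⁻¹ • w t, w'⟫) / ‖w t‖)
      t := by
  have hr : ‖w t‖ ≠ 0 := norm_ne_zero_iff.mpr h0
  have hquot : (fun s => ⟪u s, ‖w s‖⁻¹ • w s⟫) = fun s => ⟪u s, w s⟫ / ‖w s‖ := by
    ext s
    rw [real_inner_smul_right, inv_mul_eq_div]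
  rw [hquot]
  refine ((hu.inner ℝ hw).div (hw.norm h0) hr).congr_deriv ?_
  simp only [real_inner_smul_left, real_inner_smul_right]
  field_simp
  ring

end

theorem bearing_cosine_dynamics
    (V ω : ℝ) (T : EuclideanSpace ℝ (Fin 2))
    (p : ℝ → EuclideanSpace ℝ (Fin 2)) (ψ : ℝ → ℝ) (t : ℝ)
    (u e : ℝ → EuclideanSpace ℝ (Fin 2)) (c sb : ℝ → ℝ)
    (hu : ∀ s, u s = vec2 (Real.cos (ψ s)) (Real.sin (ψ s)))
    (he : ∀ s, e s = ‖T - p s‖⁻¹ • (T - p s))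
    (hc : ∀ s, c s = ⟪u s, e s⟫)
    (hsb : ∀ s, sb s = e s 0 * u s 1 - e s 1 * u s 0)
    (hp : HasDerivAt p (V • u t) t)
    (hψ : HasDerivAt ψ ω t)
    (hne : ∀ᶠ s in nhds t, p s ≠ T) :
    HasDerivAt c (-(sb t) * (ω + V * sb t / ‖p t - T‖)) t := by
  have hw0 : T - p t ≠ 0 := sub_ne_zero.mpr (Ne.symm hne.self_of_nhds)
  have hr : ‖p t - T‖ ≠ 0 := by rwa [norm_sub_rev, norm_ne_zero_iff]
  have hu_deriv : HasDerivAt u (ω • vec2 (-sin (ψ t)) (cos (ψ t))) t := by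
    rw [funext hu]
    convert hasDerivAt_vec2 hψ.cos hψ.sin using 1
    ext i; fin_cases i <;> simp [mul_comm]
  have hc_deriv := hu_deriv.inner_smul_inv_norm (hp.const_sub T) hw0
  simp only [← he, ← hc] at hc_deriv
  refine hc_deriv.congr_deriv ?_
  have hturn : ⟪vec2 (-sin (ψ t)) (cos (ψ t)), e t⟫ = -sb t := by
    rw [inner_vec2_left, hsb, hu]; simp only [vec2_apply_zero, vec2_apply_one]; ring
  have hunit : ‖u t‖ = 1 := by rw [hu, norm_vec2_cos_sin]
  have he_unit : ‖e t‖ = 1 := by rw [he]; exact norm_smul_inv_norm (𝕜 := ℝ) hw0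
  have hpyth : c t ^ 2 + sb t ^ 2 = 1 := by
    have := inner_sq_add_cross_sq (e t) (u t)
    rwa [he_unit, hunit, ← hsb, real_inner_comm, ← hc, one_pow, one_mul] at this
  simp only [real_inner_smul_left, inner_neg_right, real_inner_smul_right,
    real_inner_self_eq_norm_sq, hunit, hturn, real_inner_comm (u t) (e t), ← hc, norm_sub_rev T]
  field_simp
  linear_combination V * hpyth
end

section
/- Let V > 0, r_d > 0, k > 0 and let r, θ : ℝ → ℝ be differentiable functions satisfying for all t ≥ t₀: r'(t) = −V·cos θ(t), θ'(t) = ω(t) + V·sin θ(t)/r(t), where ω(t) = 2·k·r(t)·V·(cos θ(t) − √(1 − (r_d/r(t))²)) if r(t) ≥ r_d and ω(t) = 0 otherwise. If r(t₀) ≥ r_d and arcsin(r_d/r(t₀)) < θ(t₀) < 2π − arcsin(r_d/r(t₀)), then r(t) ≥ r_d for all t ≥ t₀, and moreover arcsin(r_d/r(t)) ≤ θ(t) < 2π − arcsin(r_d/r(t)) for all t ≥ t₀. -/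
/-!
In Cartesian coordinates `x = r cos θ`, `y = r sin θ` centred on the target the closed loop reads
`x' = -V - y ω`, `y' = x ω`. The admissible region, outside both `C_d` and the half-strip
`{x > 0, |y| < r_d}`, is the superlevel set `{F ≥ 0}` of the `C¹` function
`F = min(x, 0)² + y² - r_d²`. Along trajectories `F' = -2 V x ≥ 0` where `x ≤ 0`, while for `x > 0`
the control law gives `|F'| ≤ 4 k V |y| |F|`; a Grönwall-type comparison therefore keeps `F ≥ 0`.
Hence `r ≥ r_d`, the bearing never reaches `0` or `2π` (there `F = -r_d² < 0`), and
`arcsin (r_d / r) ≤ θ ≤ 2π - arcsin (r_d / r)`. The upper bound is strict because the lower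
tangent ray `{x ≥ 0, y = -r_d}` cannot be reached: at its points `x' < 0`, so it could only be hit
from `{x > 0, y ≤ -r_d}`, where `ω ≤ 0` makes `y` non-increasing.
-/

open Real Set Filter Topology Asymptotics

theorem hasDerivAt_min_zero_sq (u : ℝ) :
    HasDerivAt (fun v : ℝ => min v 0 ^ 2) (2 * min u 0) u := by
  rcases lt_trichotomy u 0 with hu | rfl | hu
  · have hloc : (fun v : ℝ => min v 0 ^ 2) =ᶠ[𝓝 u] fun v => v ^ 2 := by
      filter_upwards [eventually_lt_nhds hu] with v hv
      rw [min_eq_left hv.le]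
    rw [min_eq_left hu.le]
    simpa using (hasDerivAt_pow 2 u).congr_of_eventuallyEq hloc
  · rw [hasDerivAt_iff_isLittleO_nhds_zero]
    refine (IsBigO.of_bound 1 (Eventually.of_forall fun h => ?_)).trans_isLittleO
      (isLittleO_pow_id one_lt_two)
    simp only [zero_add, min_self, ne_eq, OfNat.ofNat_ne_zero, not_false_eq_true, zero_pow,
      sub_zero, mul_zero, smul_zero, norm_pow, Real.norm_eq_abs, one_mul]
    rcases le_total h 0 with h0 | h0
    · rw [min_eq_left h0]
    · rw [min_eq_right h0]
      exact pow_le_pow_left₀ (abs_nonneg 0) (by simp) 2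
  · have hloc : (fun v : ℝ => min v 0 ^ 2) =ᶠ[𝓝 u] fun _ => 0 := by
      filter_upwards [eventually_gt_nhds hu] with v hv
      rw [min_eq_right hv.le, zero_pow two_ne_zero]
    rw [min_eq_right hu.le, mul_zero]
    exact (hasDerivAt_const u 0).congr_of_eventuallyEq hloc

theorem HasDerivAt.eventually_nhdsLT_lt {f : ℝ → ℝ} {f' x : ℝ} (hf : HasDerivAt f f' x)
    (hf' : f' < 0) : ∀ᶠ y in 𝓝[<] x, f x < f y := by
  have hslope := (hasDerivAt_iff_tendsto_slope.1 hf).mono_left (nhdsLT_le_nhdsNE x)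
  filter_upwards [hslope.eventually (eventually_lt_nhds hf'), self_mem_nhdsWithin] with y hy hyx
  rw [slope_def_field] at hy
  have hyx' : y - x < 0 := sub_neg.2 hyx
  rcases div_neg_iff.1 hy with ⟨_, h⟩ | ⟨h, _⟩ <;> linarith

theorem ContinuousOn.lt_of_forall_ne {f : ℝ → ℝ} {a b p : ℝ} (hf : ContinuousOn f (Icc a b))
    (hab : a ≤ b) (ha : p < f a) (hp : ∀ t ∈ Icc a b, f t ≠ p) : p < f b := by
  by_contra! hb
  obtain ⟨c, hc, hfc⟩ := intermediate_value_Icc' hab hf ⟨hb, ha.le⟩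
  exact hp c hc hfc

/-- Where `f < 0` the bound says `(e^{-L t} f)' ≥ 0`, so `f` cannot leave `[0, ∞)`. -/
theorem nonneg_of_forall_neg_imp_mul_le_deriv {f f' : ℝ → ℝ} {a b L : ℝ} (hab : a ≤ b)
    (hf : ContinuousOn f (Icc a b)) (hf' : ∀ t ∈ Ioo a b, HasDerivAt f (f' t) t)
    (hL : ∀ t ∈ Ioo a b, f t < 0 → L * f t ≤ f' t) (ha : 0 ≤ f a) : 0 ≤ f b := by
  by_contra! hb
  set S := Icc a b ∩ f ⁻¹' Ici 0
  have hbdd : BddAbove S := ⟨b, fun t ht => ht.1.2⟩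
  obtain ⟨⟨has, hsb⟩, hfs⟩ := (hf.preimage_isClosed_of_isClosed isClosed_Icc isClosed_Ici).csSup_mem
    ⟨a, ⟨le_rfl, hab⟩, ha⟩ hbdd
  set s := sSup S
  have hfs : 0 ≤ f s := hfs
  have hneg : ∀ t ∈ Ioc s b, f t < 0 := fun t ht => by
    by_contra! h
    exact (le_csSup hbdd ⟨⟨has.trans ht.1.le, ht.2⟩, h⟩).not_gt ht.1
  have hsb : s < b := hsb.lt_of_ne fun h => (h ▸ hb).not_ge hfs
  have hmono : MonotoneOn (fun t => exp (-L * t) * f t) (Icc s b) := by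
    refine monotoneOn_of_hasDerivWithinAt_nonneg (f' := fun t => exp (-L * t) * (f' t - L * f t))
      (convex_Icc s b) ((continuous_const.mul continuous_id).rexp.continuousOn.mul
        (hf.mono (Icc_subset_Icc_left has))) (fun t ht => ?_) (fun t ht => ?_)
      <;> rw [interior_Icc] at ht
    · have := ((hasDerivAt_id t).const_mul (-L)).exp.mul (hf' t ⟨has.trans_lt ht.1, ht.2⟩)
      exact (this.congr_deriv (by simp only [id, mul_one]; ring)).hasDerivWithinAt
    · have := hL t ⟨has.trans_lt ht.1, ht.2⟩ (hneg t ⟨ht.1, ht.2.le⟩)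
      exact mul_nonneg (exp_pos _).le (by linarith)
  have hsb' : exp (-L * s) * f s ≤ exp (-L * b) * f b :=
    hmono ⟨le_rfl, hsb.le⟩ ⟨hsb.le, le_rfl⟩ hsb.le
  nlinarith [exp_pos (-L * s), exp_pos (-L * b)]

theorem not_of_forall_exists_earlier {P : ℝ → Prop} {a b : ℝ}
    (hP : IsClosed (Icc a b ∩ {t | P t})) (ha : ¬P a)
    (hback : ∀ t ∈ Ioc a b, P t → ∃ u ∈ Ico a t, P u) : ∀ t ∈ Icc a b, ¬P t := by
  intro t ht hPt
  have hbdd : BddBelow (Icc a b ∩ {t | P t}) := ⟨a, fun u hu => hu.1.1⟩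
  obtain ⟨⟨has, hsb⟩, hPs⟩ := hP.csInf_mem ⟨t, ht, hPt⟩ hbdd
  obtain ⟨u, hu, hPu⟩ := hback _ ⟨has.lt_of_ne fun h => ha (h ▸ hPs), hsb⟩ hPs
  exact (csInf_le hbdd ⟨⟨hu.1, hu.2.le.trans hsb⟩, hPu⟩).not_gt hu.2

theorem min_two_pi_sub_mem_Icc {φ : ℝ} (hφ : φ ∈ Icc 0 (2 * π)) :
    min φ (2 * π - φ) ∈ Icc 0 π := by
  rcases le_total φ π with h | h
  · rw [min_eq_left (by linarith)]; exact ⟨hφ.1, h⟩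
  · rw [min_eq_right (by linarith)]; exact ⟨by linarith [hφ.2], by linarith⟩

theorem cos_min_two_pi_sub (φ : ℝ) : cos (min φ (2 * π - φ)) = cos φ := by
  rcases min_choice φ (2 * π - φ) with h | h <;> rw [h]
  exact cos_two_pi_sub φ

theorem le_and_le_two_pi_sub_iff_cos_le {a φ : ℝ} (ha : a ∈ Icc 0 π) (hφ : φ ∈ Icc 0 (2 * π)) :
    a ≤ φ ∧ φ ≤ 2 * π - a ↔ cos φ ≤ cos a := by
  rw [← cos_min_two_pi_sub, strictAntiOn_cos.le_iff_ge (min_two_pi_sub_mem_Icc hφ) ha, le_min_iff,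
    le_sub_comm]

theorem lt_and_lt_two_pi_sub_iff_cos_lt {a φ : ℝ} (ha : a ∈ Icc 0 π) (hφ : φ ∈ Icc 0 (2 * π)) :
    a < φ ∧ φ < 2 * π - a ↔ cos φ < cos a := by
  rw [← cos_min_two_pi_sub, strictAntiOn_cos.lt_iff_gt (min_two_pi_sub_mem_Icc hφ) ha, lt_min_iff,
    lt_sub_comm]

theorem mul_cos_sq_add_mul_sin_sq (ρ φ : ℝ) : (ρ * cos φ) ^ 2 + (ρ * sin φ) ^ 2 = ρ ^ 2 := by
  linear_combination ρ ^ 2 * cos_sq_add_sin_sq φ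

theorem abs_mul_sub_le_abs_sq_sub {a b : ℝ} (ha : 0 ≤ a) (hb : 0 ≤ b) :
    |a * (a - b)| ≤ |a ^ 2 - b ^ 2| := by
  rw [sq_sub_sq, abs_mul, abs_mul, abs_of_nonneg ha, abs_of_nonneg (add_nonneg ha hb)]
  exact mul_le_mul_of_nonneg_right (le_add_of_nonneg_right hb) (abs_nonneg _)

namespace Circumnavigation

variable {V r_d k ρ φ : ℝ}

theorem cos_le_sqrt_of_sq_le (hρ : 0 < ρ) (h : ρ * cos φ ≤ 0 ∨ r_d ^ 2 ≤ (ρ * sin φ) ^ 2) :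
    cos φ ≤ √(1 - (r_d / ρ) ^ 2) := by
  rcases h with h | h
  · exact (nonpos_of_mul_nonpos_right h hρ).trans (sqrt_nonneg _)
  · refine (le_abs_self _).trans (abs_le_sqrt ?_)
    rw [div_pow, le_sub_iff_add_le, ← le_sub_iff_add_le', div_le_iff₀ (by positivity)]
    nlinarith [sin_sq_add_cos_sq φ]

theorem lt_or_sq_lt_of_cos_lt_sqrt (hρ : 0 < ρ) (h : cos φ < √(1 - (r_d / ρ) ^ 2)) :
    ρ * cos φ < 0 ∨ r_d ^ 2 < (ρ * sin φ) ^ 2 := by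
  by_contra! ⟨hx, hy⟩
  have hcos : 0 ≤ cos φ := nonneg_of_mul_nonneg_right hx hρ
  refine h.not_ge ((sqrt_le_sqrt ?_).trans (sqrt_sq hcos).le)
  rw [div_pow, sub_le_iff_le_add, ← sub_le_iff_le_add', le_div_iff₀ (by positivity)]
  nlinarith [sin_sq_add_cos_sq φ]

def barrier (r_d x y : ℝ) : ℝ := min x 0 ^ 2 + y ^ 2 - r_d ^ 2

theorem barrier_nonneg_iff {x y : ℝ} :
    0 ≤ barrier r_d x y ↔ r_d ^ 2 ≤ x ^ 2 + y ^ 2 ∧ (x ≤ 0 ∨ r_d ^ 2 ≤ y ^ 2) := by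
  unfold barrier
  rcases le_or_gt x 0 with hx | hx
  · simp only [min_eq_left hx, hx, true_or, and_true]
    constructor <;> intro h <;> linarith
  · simp only [min_eq_right hx.le, hx.not_ge, false_or]
    constructor
    · intro h; exact ⟨by nlinarith, by linarith⟩
    · intro h; linarith [h.2]

noncomputable def control (V r_d k ρ φ : ℝ) : ℝ :=
  if r_d ≤ ρ then 2 * k * ρ * V * (cos φ - √(1 - (r_d / ρ) ^ 2)) else 0

theorem control_eq (hρ : 0 < ρ) (h : r_d ≤ ρ) :
    control V r_d k ρ φ = 2 * k * V * (ρ * cos φ - √(ρ ^ 2 - r_d ^ 2)) := by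
  have hsq : ρ ^ 2 - r_d ^ 2 = ρ ^ 2 * (1 - (r_d / ρ) ^ 2) := by field_simp
  rw [control, if_pos h, hsq, sqrt_mul (sq_nonneg ρ), sqrt_sq hρ.le]
  ring

theorem control_nonpos (hk : 0 ≤ k) (hV : 0 ≤ V) (hrd : 0 < r_d)
    (h : r_d ^ 2 ≤ (ρ * sin φ) ^ 2) : control V r_d k ρ φ ≤ 0 := by
  unfold control
  split_ifs with hρ
  · exact mul_nonpos_of_nonneg_of_nonpos (by have := hrd.trans_le hρ; positivity)
      (sub_nonpos.2 (cos_le_sqrt_of_sq_le (hrd.trans_le hρ) (Or.inr h)))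
  · exact le_rfl

theorem abs_mul_control_le (hk : 0 ≤ k) (hV : 0 ≤ V) (hrd : 0 < r_d) (hx : 0 < ρ * cos φ) :
    |ρ * cos φ * control V r_d k ρ φ| ≤ 2 * k * V * |(ρ * sin φ) ^ 2 - r_d ^ 2| := by
  by_cases hρ : r_d ≤ ρ
  · have hρ0 : 0 < ρ := hrd.trans_le hρ
    have hs : √(ρ ^ 2 - r_d ^ 2) ^ 2 = ρ ^ 2 - r_d ^ 2 := sq_sqrt (by nlinarith)
    have hxs := abs_mul_sub_le_abs_sq_sub hx.le (sqrt_nonneg (ρ ^ 2 - r_d ^ 2))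
    rw [hs, show (ρ * cos φ) ^ 2 - (ρ ^ 2 - r_d ^ 2) = -((ρ * sin φ) ^ 2 - r_d ^ 2) by
      linear_combination ρ ^ 2 * sin_sq_add_cos_sq φ, abs_neg] at hxs
    rw [control_eq hρ0 hρ, mul_left_comm, abs_mul, abs_of_nonneg (by positivity : 0 ≤ 2 * k * V)]
    gcongr
  · rw [control, if_neg hρ, mul_zero, abs_zero]
    positivity

theorem mem_Ioo_of_arcsin_lt (hrd : 0 < r_d) (hρ : r_d ≤ ρ)
    (h : arcsin (r_d / ρ) < φ ∧ φ < 2 * π - arcsin (r_d / ρ)) : φ ∈ Ioo 0 (2 * π) :=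
  have ha : 0 < arcsin (r_d / ρ) := arcsin_pos.2 (div_pos hrd (hrd.trans_le hρ))
  ⟨ha.trans h.1, by linarith [h.2]⟩

theorem barrier_nonneg_and_not_lowerTangent_of_arcsin_lt (hrd : 0 < r_d) (hρ : r_d ≤ ρ)
    (h : arcsin (r_d / ρ) < φ ∧ φ < 2 * π - arcsin (r_d / ρ)) :
    0 ≤ barrier r_d (ρ * cos φ) (ρ * sin φ) ∧ ¬(0 ≤ ρ * cos φ ∧ ρ * sin φ = -r_d) := by
  have hρ0 : 0 < ρ := hrd.trans_le hρ
  have ha : arcsin (r_d / ρ) ∈ Icc 0 π :=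
    ⟨arcsin_nonneg.2 (div_nonneg hrd.le hρ0.le), (arcsin_le_pi_div_two _).trans (by linarith [pi_pos])⟩
  have hcos := (lt_and_lt_two_pi_sub_iff_cos_lt ha
    (Ioo_subset_Icc_self (mem_Ioo_of_arcsin_lt hrd hρ h))).1 h
  rw [cos_arcsin] at hcos
  have hxy := lt_or_sq_lt_of_cos_lt_sqrt hρ0 hcos
  refine ⟨barrier_nonneg_iff.2 ⟨?_, hxy.imp le_of_lt le_of_lt⟩, ?_⟩
  · rw [mul_cos_sq_add_mul_sin_sq]; nlinarith
  · rintro ⟨hx, hy⟩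
    rw [hy, neg_sq] at hxy
    exact hxy.elim (fun h => h.not_ge hx) (lt_irrefl _)

theorem arcsin_le_and_lt_of_barrier_nonneg (hrd : 0 < r_d) (hρ : r_d ≤ ρ)
    (hφ : φ ∈ Icc 0 (2 * π)) (hF : 0 ≤ barrier r_d (ρ * cos φ) (ρ * sin φ))
    (hne : ¬(0 ≤ ρ * cos φ ∧ ρ * sin φ = -r_d)) :
    arcsin (r_d / ρ) ≤ φ ∧ φ < 2 * π - arcsin (r_d / ρ) := by
  have hρ0 : 0 < ρ := hrd.trans_le hρ
  have ha : arcsin (r_d / ρ) ∈ Icc 0 π :=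
    ⟨arcsin_nonneg.2 (div_nonneg hrd.le hρ0.le), (arcsin_le_pi_div_two _).trans (by linarith [pi_pos])⟩
  obtain ⟨hlow, hup⟩ := (le_and_le_two_pi_sub_iff_cos_le ha hφ).2 <| by
    rw [cos_arcsin]; exact cos_le_sqrt_of_sq_le hρ0 (barrier_nonneg_iff.1 hF).2
  refine ⟨hlow, hup.lt_of_ne fun heq => hne ?_⟩
  rw [heq, cos_two_pi_sub, sin_two_pi_sub,
    sin_arcsin (by linarith [div_pos hrd hρ0]) ((div_le_one hρ0).2 hρ)]
  exact ⟨mul_nonneg hρ0.le (cos_arcsin_nonneg _), by field_simp⟩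

section Kinematics

variable {r θ : ℝ → ℝ} {t ω : ℝ}

theorem hasDerivAt_mul_cos (hr : HasDerivAt r (-V * cos (θ t)) t)
    (hθ : HasDerivAt θ (ω + V * sin (θ t) / r t) t) (h : r t ≠ 0) :
    HasDerivAt (fun s => r s * cos (θ s)) (-V - r t * sin (θ t) * ω) t := by
  refine (hr.fun_mul hθ.cos).congr_deriv ?_
  field_simp
  linear_combination (-V) * sin_sq_add_cos_sq (θ t)

theorem hasDerivAt_mul_sin (hr : HasDerivAt r (-V * cos (θ t)) t)
    (hθ : HasDerivAt θ (ω + V * sin (θ t) / r t) t) (h : r t ≠ 0) :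
    HasDerivAt (fun s => r s * sin (θ s)) (r t * cos (θ t) * ω) t := by
  refine (hr.fun_mul hθ.sin).congr_deriv ?_
  field_simp
  ring

/-- When `r t = 0` (so `x = 0`) the junk value `V * sin (θ t) / r t` only enters through terms
that cancel. -/
theorem hasDerivAt_barrier (hr : HasDerivAt r (-V * cos (θ t)) t)
    (hθ : HasDerivAt θ (ω + V * sin (θ t) / r t) t) :
    HasDerivAt (fun s => barrier r_d (r s * cos (θ s)) (r s * sin (θ s)))
      (if r t * cos (θ t) ≤ 0 then -2 * V * (r t * cos (θ t))
        else 2 * (r t * cos (θ t)) * (r t * sin (θ t)) * ω) t := by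
  have hx := hr.fun_mul hθ.cos
  have hy := hr.fun_mul hθ.sin
  refine ((((hasDerivAt_min_zero_sq _).comp t hx).add (hy.pow 2)).sub_const (r_d ^ 2)).congr_deriv ?_
  split_ifs with hneg
  · rw [min_eq_left hneg]
    linear_combination (-2 * V * r t * cos (θ t)) * sin_sq_add_cos_sq (θ t)
  · have h : r t ≠ 0 := by rintro h; simp [h] at hneg
    rw [min_eq_right (not_le.1 hneg).le]
    field_simp
    ring

end Kinematics

structure IsClosedLoop (V r_d k t₀ : ℝ) (r θ : ℝ → ℝ) : Prop where
  hasDerivAt_range : ∀ t, t₀ ≤ t → HasDerivAt r (-V * cos (θ t)) t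
  hasDerivAt_bearing : ∀ t, t₀ ≤ t →
    HasDerivAt θ (control V r_d k (r t) (θ t) + V * sin (θ t) / r t) t

namespace IsClosedLoop

variable {t₀ : ℝ} {r θ : ℝ → ℝ}

theorem continuousOn_range (h : IsClosedLoop V r_d k t₀ r θ) : ContinuousOn r (Ici t₀) :=
  fun t ht => (h.hasDerivAt_range t ht).continuousAt.continuousWithinAt

theorem continuousOn_bearing (h : IsClosedLoop V r_d k t₀ r θ) : ContinuousOn θ (Ici t₀) :=
  fun t ht => (h.hasDerivAt_bearing t ht).continuousAt.continuousWithinAt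

theorem continuousOn_mul_cos (h : IsClosedLoop V r_d k t₀ r θ) :
    ContinuousOn (fun t => r t * cos (θ t)) (Ici t₀) :=
  h.continuousOn_range.mul (continuous_cos.comp_continuousOn h.continuousOn_bearing)

theorem continuousOn_mul_sin (h : IsClosedLoop V r_d k t₀ r θ) :
    ContinuousOn (fun t => r t * sin (θ t)) (Ici t₀) :=
  h.continuousOn_range.mul (continuous_sin.comp_continuousOn h.continuousOn_bearing)

theorem barrier_nonneg (h : IsClosedLoop V r_d k t₀ r θ) (hV : 0 ≤ V) (hk : 0 ≤ k)
    (hrd : 0 < r_d) (h₀ : 0 ≤ barrier r_d (r t₀ * cos (θ t₀)) (r t₀ * sin (θ t₀)))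
    {T : ℝ} (hT : t₀ ≤ T) : 0 ≤ barrier r_d (r T * cos (θ T)) (r T * sin (θ T)) := by
  obtain ⟨M, hM⟩ := isCompact_Icc.exists_bound_of_continuousOn
    (h.continuousOn_mul_sin.mono (Icc_subset_Ici_self : Icc t₀ T ⊆ Ici t₀))
  have hM₀ : 0 ≤ M := (norm_nonneg _).trans (hM t₀ ⟨le_rfl, hT⟩)
  have hderiv := fun t (ht : t₀ ≤ t) =>
    hasDerivAt_barrier (r_d := r_d) (h.hasDerivAt_range t ht) (h.hasDerivAt_bearing t ht)
  refine nonneg_of_forall_neg_imp_mul_le_deriv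
    (f := fun s => barrier r_d (r s * cos (θ s)) (r s * sin (θ s))) (L := 4 * k * V * M) hT
    (fun t ht => (hderiv t ht.1).continuousAt.continuousWithinAt) (fun t ht => hderiv t ht.1.le)
    (fun t ht hneg => ?_) h₀
  set x := r t * cos (θ t)
  set y := r t * sin (θ t)
  set ω := control V r_d k (r t) (θ t)
  split_ifs with hx
  · exact (mul_nonpos_of_nonneg_of_nonpos (by positivity) hneg.le).trans (by nlinarith)
  · have hx : 0 < x := not_le.1 hx
    have hF : barrier r_d x y = y ^ 2 - r_d ^ 2 := by simp [barrier, min_eq_right hx.le]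
    have hy : |y| ≤ M := by simpa only [Real.norm_eq_abs] using hM t ⟨ht.1.le, ht.2.le⟩
    have hxω : |x * ω| ≤ 2 * k * V * |y ^ 2 - r_d ^ 2| := abs_mul_control_le hk hV hrd hx
    rw [hF] at hneg ⊢
    rw [abs_of_neg hneg] at hxω
    have hyxω : |y * (x * ω)| ≤ M * (2 * k * V * -(y ^ 2 - r_d ^ 2)) :=
      abs_mul y (x * ω) ▸ mul_le_mul hy hxω (abs_nonneg _) hM₀
    nlinarith [neg_abs_le (y * (x * ω))]

theorem le_range (h : IsClosedLoop V r_d k t₀ r θ) (hrd : 0 < r_d) (hr₀ : r_d ≤ r t₀)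
    (hF : ∀ t, t₀ ≤ t → 0 ≤ barrier r_d (r t * cos (θ t)) (r t * sin (θ t)))
    {T : ℝ} (hT : t₀ ≤ T) : r_d ≤ r T := by
  have hsq : ∀ t, t₀ ≤ t → r_d ^ 2 ≤ r t ^ 2 := fun t ht =>
    mul_cos_sq_add_mul_sin_sq (r t) (θ t) ▸ (barrier_nonneg_iff.1 (hF t ht)).1
  have hpos : 0 < r T := (h.continuousOn_range.mono Icc_subset_Ici_self).lt_of_forall_ne hT
    (hrd.trans_le hr₀) fun t ht h0 => by nlinarith [hsq t ht.1]
  exact (pow_le_pow_iff_left₀ hrd.le hpos.le two_ne_zero).1 (hsq T hT)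

theorem bearing_mem_Ioo (h : IsClosedLoop V r_d k t₀ r θ) (hrd : 0 < r_d)
    (hθ₀ : θ t₀ ∈ Ioo 0 (2 * π)) (hr : ∀ t, t₀ ≤ t → 0 < r t)
    (hF : ∀ t, t₀ ≤ t → 0 ≤ barrier r_d (r t * cos (θ t)) (r t * sin (θ t)))
    {T : ℝ} (hT : t₀ ≤ T) : θ T ∈ Ioo 0 (2 * π) := by
  have hcos : ∀ t, t₀ ≤ t → cos (θ t) ≠ 1 := by
    intro t ht h1
    have hsin : sin (θ t) = 0 := by nlinarith [sin_sq_add_cos_sq (θ t)]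
    have hxy := (barrier_nonneg_iff.1 (hF t ht)).2
    rw [h1, hsin] at hxy
    have hrt := hr t ht
    rcases hxy with hx | hy <;> nlinarith
  have hcont := h.continuousOn_bearing.mono (Icc_subset_Ici_self : Icc t₀ T ⊆ Ici t₀)
  refine ⟨hcont.lt_of_forall_ne hT hθ₀.1 fun t ht h0 => hcos t ht.1 (by rw [h0, cos_zero]), ?_⟩
  refine neg_lt_neg_iff.1 (hcont.neg.lt_of_forall_ne hT (neg_lt_neg hθ₀.2)
    fun t ht h2π => hcos t ht.1 ?_)
  rw [neg_inj.1 h2π, cos_two_pi]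

/-- At a point of the lower tangent ray `ω ≤ 0`, so `x' = -V + r_d ω < 0` and `x > 0` just
before; there the barrier forces `y ≤ -r_d` while `y' = x ω ≤ 0`, so `y` was already `-r_d`. -/
theorem exists_earlier_of_lowerTangent (h : IsClosedLoop V r_d k t₀ r θ) (hV : 0 < V)
    (hk : 0 ≤ k) (hrd : 0 < r_d) (hr : ∀ t, t₀ ≤ t → r_d ≤ r t)
    (hF : ∀ t, t₀ ≤ t → 0 ≤ barrier r_d (r t * cos (θ t)) (r t * sin (θ t)))
    {t₁ : ℝ} (ht₁ : t₀ < t₁) (hx : 0 ≤ r t₁ * cos (θ t₁)) (hy : r t₁ * sin (θ t₁) = -r_d) :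
    ∃ u ∈ Ico t₀ t₁, 0 ≤ r u * cos (θ u) ∧ r u * sin (θ u) = -r_d := by
  have hr₀ : ∀ t, t₀ ≤ t → r t ≠ 0 := fun t ht => (hrd.trans_le (hr t ht)).ne'
  have hω : control V r_d k (r t₁) (θ t₁) ≤ 0 := control_nonpos hk hV.le hrd (by rw [hy, neg_sq])
  have hx' := hasDerivAt_mul_cos (h.hasDerivAt_range t₁ ht₁.le) (h.hasDerivAt_bearing t₁ ht₁.le)
    (hr₀ t₁ ht₁.le)
  have hy' := hasDerivAt_mul_sin (h.hasDerivAt_range t₁ ht₁.le) (h.hasDerivAt_bearing t₁ ht₁.le)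
    (hr₀ t₁ ht₁.le)
  have hevx := hx'.eventually_nhdsLT_lt (by rw [hy]; nlinarith)
  have hevy : ∀ᶠ u in 𝓝[<] t₁, r u * sin (θ u) < 0 :=
    nhdsWithin_le_nhds (hy'.continuousAt.eventually (eventually_lt_nhds (by linarith)))
  obtain ⟨l, hl, hsub⟩ := mem_nhdsLT_iff_exists_Ioo_subset.1
    (hevx.and (hevy.and (Ioo_mem_nhdsLT ht₁)))
  have hbefore : ∀ w ∈ Ioo l t₁,
      t₀ < w ∧ 0 < r w * cos (θ w) ∧ r_d ^ 2 ≤ (r w * sin (θ w)) ^ 2 := fun w hw => by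
    obtain ⟨hxw, -, htw⟩ := hsub hw
    have hxw' := hx.trans_lt hxw
    exact ⟨htw.1, hxw', (barrier_nonneg_iff.1 (hF w htw.1.le)).2.resolve_left hxw'.not_ge⟩
  obtain ⟨u, hu⟩ := nonempty_Ioo.2 (mem_Iio.1 hl)
  obtain ⟨htu, hxu, -⟩ := hbefore u hu
  have hanti : AntitoneOn (fun s => r s * sin (θ s)) (Icc u t₁) := by
    refine antitoneOn_of_hasDerivWithinAt_nonpos
      (f' := fun w => r w * cos (θ w) * control V r_d k (r w) (θ w)) (convex_Icc u t₁)
      (h.continuousOn_mul_sin.mono fun w hw => htu.le.trans hw.1) (fun w hw => ?_) (fun w hw => ?_)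
      <;> rw [interior_Icc] at hw <;> obtain ⟨htw, hxw, hyw⟩ := hbefore w ⟨hu.1.trans hw.1, hw.2⟩
    · exact (hasDerivAt_mul_sin (h.hasDerivAt_range w htw.le) (h.hasDerivAt_bearing w htw.le)
        (hr₀ w htw.le)).hasDerivWithinAt
    · exact mul_nonpos_of_nonneg_of_nonpos hxw.le (control_nonpos hk hV.le hrd hyw)
  have hyu₁ : r t₁ * sin (θ t₁) ≤ r u * sin (θ u) :=
    hanti ⟨le_rfl, hu.2.le⟩ ⟨hu.2.le, le_rfl⟩ hu.2.le
  have hyu₀ := (hsub hu).2.1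
  exact ⟨u, ⟨htu.le, hu.2⟩, hxu.le, by nlinarith [hbefore u hu]⟩

theorem not_lowerTangent (h : IsClosedLoop V r_d k t₀ r θ) (hV : 0 < V) (hk : 0 ≤ k)
    (hrd : 0 < r_d) (hr : ∀ t, t₀ ≤ t → r_d ≤ r t)
    (hF : ∀ t, t₀ ≤ t → 0 ≤ barrier r_d (r t * cos (θ t)) (r t * sin (θ t)))
    (h₀ : ¬(0 ≤ r t₀ * cos (θ t₀) ∧ r t₀ * sin (θ t₀) = -r_d)) {T : ℝ} (hT : t₀ ≤ T) :
    ¬(0 ≤ r T * cos (θ T) ∧ r T * sin (θ T) = -r_d) := by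
  have hclosed : IsClosed (Icc t₀ T ∩ {t | 0 ≤ r t * cos (θ t) ∧ r t * sin (θ t) = -r_d}) :=
    (h.continuousOn_mul_cos.mono Icc_subset_Ici_self).prodMk
      (h.continuousOn_mul_sin.mono Icc_subset_Ici_self) |>.preimage_isClosed_of_isClosed
        isClosed_Icc (isClosed_Ici.prod (isClosed_singleton (x := -r_d)))
  exact not_of_forall_exists_earlier hclosed h₀
    (fun t ht hP => h.exists_earlier_of_lowerTangent hV hk hrd hr hF ht.1 hP.1 hP.2) T ⟨hT, le_rfl⟩

end IsClosedLoop

end Circumnavigation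

theorem uav_never_enters_Cd
    (V r_d k t₀ : ℝ) (r θ : ℝ → ℝ)
    (hV : 0 < V) (hrd : 0 < r_d) (hk : 0 < k)
    (hr' : ∀ t, t₀ ≤ t → HasDerivAt r (-V * Real.cos (θ t)) t)
    (hθ' : ∀ t, t₀ ≤ t → HasDerivAt θ
      ((if r_d ≤ r t then
          2 * k * r t * V * (Real.cos (θ t) - Real.sqrt (1 - (r_d / r t) ^ 2))
        else 0) + V * Real.sin (θ t) / r t) t)
    (h0 : r_d ≤ r t₀)
    (hθ0 : Real.arcsin (r_d / r t₀) < θ t₀ ∧ θ t₀ < 2 * π - Real.arcsin (r_d / r t₀)) :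
    ∀ t, t₀ ≤ t → r_d ≤ r t ∧
      Real.arcsin (r_d / r t) ≤ θ t ∧ θ t < 2 * π - Real.arcsin (r_d / r t) := by
  have h : Circumnavigation.IsClosedLoop V r_d k t₀ r θ := ⟨hr', hθ'⟩
  obtain ⟨hF₀, hne₀⟩ :=
    Circumnavigation.barrier_nonneg_and_not_lowerTangent_of_arcsin_lt hrd h0 hθ0
  have hF := fun t (ht : t₀ ≤ t) => h.barrier_nonneg hV.le hk.le hrd hF₀ ht
  have hr := fun t (ht : t₀ ≤ t) => h.le_range hrd h0 hF ht
  intro t ht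
  have hθ := h.bearing_mem_Ioo hrd (Circumnavigation.mem_Ioo_of_arcsin_lt hrd h0 hθ0)
    (fun t ht => hrd.trans_le (hr t ht)) hF ht
  exact ⟨hr t ht, Circumnavigation.arcsin_le_and_lt_of_barrier_nonneg hrd (hr t ht)
    (Ioo_subset_Icc_self hθ) (hF t ht) (h.not_lowerTangent hV hk.le hrd hr hF hne₀ ht)⟩
end

section
/- Let V > 0, r_d > 0, k > 0 and let r, θ : ℝ → ℝ be differentiable functions satisfying for all t ≥ t*: r(t) ≥ r_d, r'(t) = −V·cos θ(t), and θ'(t) = 2·k·r(t)·V·(cos θ(t) − √(1 − (r_d/r(t))²)) + V·sin θ(t)/r(t). If θ(t*) ∈ [0, π], then θ(t) ∈ [0, π] for all t ≥ t*. -/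
open Real Filter Topology

lemma no_upcross {f : ℝ → ℝ} {a T c : ℝ} (haT : a ≤ T)
    (hd : ∀ t ∈ Set.Icc a T, ∃ d, HasDerivAt f d t ∧ (f t = c → d < 0))
    (h0 : f a ≤ c) : f T ≤ c := by
  by_contra hT
  push_neg at hT
  have hcont : ContinuousOn f (Set.Icc a T) := fun t ht =>
    ((hd t ht).choose_spec.1.continuousAt).continuousWithinAt
  set A := {t ∈ Set.Icc a T | f t ≤ c} with hA
  have hAclosed : IsClosed A := by
    have : A = Set.Icc a T ∩ f ⁻¹' Set.Iic c := by
      ext t; simp [hA, Set.mem_setOf_eq, and_comm]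
    rw [this]
    exact hcont.preimage_isClosed_of_isClosed isClosed_Icc isClosed_Iic
  have haA : a ∈ A := ⟨⟨le_refl a, haT⟩, h0⟩
  have hbdd : BddAbove A := ⟨T, fun t ht => ht.1.2⟩
  set s := sSup A with hs
  have hsA : s ∈ A := hAclosed.csSup_mem ⟨a, haA⟩ hbdd
  have hsT : s < T :=
    lt_of_le_of_ne hsA.1.2 (fun h => absurd (h ▸ hsA.2) (not_le.2 hT))
  have hgt : ∀ t ∈ Set.Ioc s T, c < f t := by
    intro t ht
    by_contra hle
    push_neg at hle
    have htA : t ∈ A := ⟨⟨le_trans hsA.1.1 ht.1.le, ht.2⟩, hle⟩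
    exact absurd (le_csSup hbdd htA) (not_le.2 ht.1)
  have hmem : Set.Ioc s T ∈ 𝓝[>] s := Ioc_mem_nhdsGT_of_mem ⟨le_refl s, hsT⟩
  obtain ⟨d, hdd, hds⟩ := hd s hsA.1
  have hfs : f s = c := by
    refine le_antisymm hsA.2 ?_
    have htend : Tendsto f (𝓝[>] s) (𝓝 (f s)) :=
      hdd.continuousAt.tendsto.mono_left nhdsWithin_le_nhds
    exact ge_of_tendsto htend (Filter.eventually_of_mem hmem fun t ht => (hgt t ht).le)
  have hdneg : d < 0 := hds hfs
  have htendslope : Tendsto (slope f s) (𝓝[≠] s) (𝓝 d) :=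
    hasDerivAt_iff_tendsto_slope.1 hdd
  have hmono : 𝓝[>] s ≤ 𝓝[≠] s :=
    nhdsWithin_mono s (fun t ht => ne_of_gt ht)
  have h1 : ∀ᶠ t in 𝓝[>] s, slope f s t < 0 :=
    (htendslope.mono_left hmono).eventually_lt_const hdneg
  have h2 : ∀ᶠ t in 𝓝[>] s, c < f t := Filter.eventually_of_mem hmem (hgt)
  have h3 : ∀ᶠ t in 𝓝[>] s, s < t :=
    eventually_mem_nhdsWithin
  obtain ⟨t, hslope, hcf, hst⟩ := (h1.and (h2.and h3)).exists
  have : f t < f s := by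
    have hpos : 0 < t - s := sub_pos.2 hst
    have := hslope
    rw [slope_def_field] at this
    -- slope f s t = (f t - f s) / (t - s)
    have h4 : f t - f s < 0 := by
      by_contra h5
      push_neg at h5
      exact absurd (div_nonneg h5 hpos.le) (not_le.2 this)
    linarith
  rw [hfs] at this
  exact absurd hcf (not_lt.2 this.le)

theorem bearing_interval_invariant
    (V r_d k tstar : ℝ) (r θ : ℝ → ℝ)
    (hV : 0 < V) (hrd : 0 < r_d) (hk : 0 < k)
    (hr : ∀ t, tstar ≤ t → r_d ≤ r t)
    (hr' : ∀ t, tstar ≤ t → HasDerivAt r (-V * Real.cos (θ t)) t)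
    (hθ' : ∀ t, tstar ≤ t → HasDerivAt θ
      (2 * k * r t * V * (Real.cos (θ t) - Real.sqrt (1 - (r_d / r t) ^ 2))
        + V * Real.sin (θ t) / r t) t)
    (hθ0 : θ tstar ∈ Set.Icc 0 π) :
    ∀ t, tstar ≤ t → θ t ∈ Set.Icc 0 π := by
  intro T hT
  have hrpos : ∀ t, tstar ≤ t → 0 < r t := fun t ht => lt_of_lt_of_le hrd (hr t ht)
  constructor
  · -- lower bound via f = -θ
    have := no_upcross (f := fun t => -θ t) (a := tstar) (T := T) (c := 0) hT
      (fun t ht => by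
        refine ⟨-(2 * k * r t * V * (Real.cos (θ t) - Real.sqrt (1 - (r_d / r t) ^ 2))
          + V * Real.sin (θ t) / r t), (hθ' t ht.1).neg, ?_⟩
        intro hzero
        have hθt : θ t = 0 := by linarith [neg_eq_zero.1 hzero]
        rw [hθt, Real.cos_zero, Real.sin_zero]
        have hrt := hrpos t ht.1
        have hsq : Real.sqrt (1 - (r_d / r t) ^ 2) < 1 := by
          rw [Real.sqrt_lt' one_pos]
          have : 0 < (r_d / r t) ^ 2 := pow_pos (div_pos hrd hrt) 2
          linarith
        have h1 : 0 < 2 * k * r t * V := by positivity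
        have h2 : 0 < 1 - Real.sqrt (1 - (r_d / r t) ^ 2) := by linarith
        have : 0 < 2 * k * r t * V * (1 - Real.sqrt (1 - (r_d / r t) ^ 2)) :=
          mul_pos h1 h2
        have hz : V * 0 / r t = 0 := by simp
        rw [hz]
        linarith)
      (by simpa using hθ0.1)
    simpa using this
  · -- upper bound
    refine no_upcross (f := θ) (a := tstar) (T := T) (c := π) hT
      (fun t ht => ⟨_, hθ' t ht.1, ?_⟩) hθ0.2
    intro hpi
    rw [hpi, Real.cos_pi, Real.sin_pi]
    have hrt := hrpos t ht.1
    have hsq : 0 ≤ Real.sqrt (1 - (r_d / r t) ^ 2) := Real.sqrt_nonneg _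
    have h1 : 0 < 2 * k * r t * V := by positivity
    have h2 : -1 - Real.sqrt (1 - (r_d / r t) ^ 2) < 0 := by linarith
    have h3 : 2 * k * r t * V * (-1 - Real.sqrt (1 - (r_d / r t) ^ 2)) < 0 :=
      mul_neg_of_pos_of_neg h1 h2
    have hz : V * 0 / r t = 0 := by simp
    rw [hz]
    linarith
end

section
/- Let V > 0, r_d > 0, k > 0 and let r, θ : ℝ → ℝ be differentiable functions satisfying for all t ≥ 0: r(t) ≥ r_d, r(t) is bounded on bounded intervals, r'(t) = −V·cos θ(t), and θ'(t) = 2·k·r(t)·V·(cos θ(t) − √(1 − (r_d/r(t))²)) + V·sin θ(t)/r(t). Then there exists t* ≥ 0 such that sin θ(t) ≥ 0 for all t ≥ t* (i.e., the bearing angle, taken modulo 2π, lies in [0, π] for all t ≥ t*). -/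
/-!
Zeros of `sin θ` can only be crossed upwards: there `cos θ = ±1`, so
`(sin θ)' = cos θ · θ' = 2krV (1 - s cos θ) > 0` with `s = √(1 - (r_d / r)²) < 1`.
Hence it suffices to reach `sin θ ≥ 0` once. If instead `sin θ < 0` forever, continuity keeps `θ`,
up to a multiple of `2π`, inside `(-π, 0)`. There the region `cos θ ≤ -1/2` is a trap in which
`θ' ≤ -k r_d V`, so it is never entered; `θ + k r²` is nonincreasing, so `r ≤ R` for some `R`;
and then `2R (θ + k r²) + r` decreases at rate at least `V/2` while staying above `-2Rπ`.
-/

open Real Set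

theorem image_le_of_deriv_neg_boundary {f f' : ℝ → ℝ} {a B : ℝ}
    (hf : ∀ t, a ≤ t → HasDerivAt f (f' t) t) (ha : f a ≤ B)
    (hB : ∀ t, a ≤ t → f t = B → f' t < 0) : ∀ t, a ≤ t → f t ≤ B := fun _ ht =>
  image_le_of_deriv_right_lt_deriv_boundary (B := fun _ => B)
    (fun x hx => (hf x hx.1).continuousAt.continuousWithinAt)
    (fun x hx => (hf x hx.1).hasDerivWithinAt) ha (fun _ => hasDerivAt_const _ _)
    (fun x hx => hB x hx.1) ⟨ht, le_rfl⟩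

theorem image_le_sub_mul_of_deriv_le {f f' : ℝ → ℝ} {a c : ℝ}
    (hf : ∀ t, a ≤ t → HasDerivAt f (f' t) t) (hf' : ∀ t, a ≤ t → f' t ≤ -c) :
    ∀ t, a ≤ t → f t ≤ f a - c * (t - a) := by
  have hB : ∀ x, HasDerivAt (fun t => f a - c * (t - a)) (-c) x := fun x => by
    simpa using (((hasDerivAt_id x).sub_const a).const_mul c).const_sub (f a)
  exact fun _ ht => image_le_of_deriv_right_le_deriv_boundary
    (fun x hx => (hf x hx.1).continuousAt.continuousWithinAt)
    (fun x hx => (hf x hx.1).hasDerivWithinAt) (by simp)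
    (fun x _ => (hB x).continuousAt.continuousWithinAt) (fun x _ => (hB x).hasDerivWithinAt)
    (fun x hx => hf' x hx.1) ⟨ht, le_rfl⟩

theorem exists_lt_of_deriv_le_neg {f f' : ℝ → ℝ} {a c : ℝ} (hc : 0 < c)
    (hf : ∀ t, a ≤ t → HasDerivAt f (f' t) t) (hf' : ∀ t, a ≤ t → f' t ≤ -c) (B : ℝ) :
    ∃ t, a ≤ t ∧ f t < B := by
  set T := a + (|f a - B| + 1) / c
  have haT : a ≤ T := le_add_of_nonneg_right (by positivity)
  refine ⟨T, haT, ?_⟩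
  have hcT : c * (T - a) = |f a - B| + 1 := by simp only [T]; field_simp; ring
  linarith [image_le_sub_mul_of_deriv_le hf hf' T haT, le_abs_self (f a - B)]

theorem IsPreconnected.exists_forall_sub_int_mul_two_pi_mem_Ioo {S : Set ℝ}
    (hS : IsPreconnected S) {x₀ : ℝ} (hx₀ : x₀ ∈ S) (hsin : ∀ x ∈ S, sin x < 0) :
    ∃ m : ℤ, ∀ x ∈ S, x - m * (2 * π) ∈ Ioo (-π) 0 := by
  set m := ⌊(x₀ + π) / (2 * π)⌋
  have hm₁ : -π ≤ x₀ - m * (2 * π) := by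
    have := Int.floor_le ((x₀ + π) / (2 * π))
    rw [le_div_iff₀ two_pi_pos] at this
    linarith
  have hm₂ : x₀ - m * (2 * π) < π := by
    have := Int.lt_floor_add_one ((x₀ + π) / (2 * π))
    rw [div_lt_iff₀ two_pi_pos] at this
    linarith
  have hzero : ∀ x ∈ S, x - m * (2 * π) ≠ -π ∧ x - m * (2 * π) ≠ 0 := by
    intro x hx
    constructor <;> intro he <;> have := hsin x hx <;>
      rw [← sin_sub_int_mul_two_pi x m, he] at this <;> simp at this
  have hy₀ : x₀ - m * (2 * π) < 0 := by
    by_contra! h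
    have := sin_nonneg_of_nonneg_of_le_pi h hm₂.le
    rw [sin_sub_int_mul_two_pi] at this
    exact this.not_gt (hsin x₀ hx₀)
  refine ⟨m, fun x hx => ?_⟩
  by_contra hout
  rcases le_or_gt (x - m * (2 * π)) (-π) with hlow | hhigh
  · have hz : m * (2 * π) - π ∈ S :=
      hS.Icc_subset hx hx₀ ⟨by linarith, by linarith⟩
    exact (hzero _ hz).1 (by ring)
  · have hhigh : 0 ≤ x - m * (2 * π) := by
      by_contra! h
      exact hout ⟨hhigh, h⟩
    have hz : m * (2 * π) ∈ S := hS.Icc_subset hx₀ hx ⟨by linarith, by linarith⟩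
    exact (hzero _ hz).2 (by ring)

structure IsStandoffTrajectory (V r_d k : ℝ) (r θ : ℝ → ℝ) : Prop where
  speed_pos : 0 < V
  radius_pos : 0 < r_d
  gain_pos : 0 < k
  radius_le : ∀ t, 0 ≤ t → r_d ≤ r t
  hasDerivAt_range : ∀ t, 0 ≤ t → HasDerivAt r (-V * cos (θ t)) t
  hasDerivAt_bearing : ∀ t, 0 ≤ t → HasDerivAt θ
    (2 * k * r t * V * (cos (θ t) - √(1 - (r_d / r t) ^ 2)) + V * sin (θ t) / r t) t

namespace IsStandoffTrajectory

variable {V r_d k : ℝ} {r θ : ℝ → ℝ}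

theorem range_pos (h : IsStandoffTrajectory V r_d k r θ) {t : ℝ} (ht : 0 ≤ t) : 0 < r t :=
  h.radius_pos.trans_le (h.radius_le t ht)

theorem sqrt_lt_one (h : IsStandoffTrajectory V r_d k r θ) {t : ℝ} (ht : 0 ≤ t) :
    √(1 - (r_d / r t) ^ 2) < 1 := by
  have := div_pos h.radius_pos (h.range_pos ht)
  rw [sqrt_lt' one_pos]
  nlinarith

theorem mul_sqrt_nonneg (h : IsStandoffTrajectory V r_d k r θ) {t : ℝ} (ht : 0 ≤ t) :
    0 ≤ 2 * k * r t * V * √(1 - (r_d / r t) ^ 2) := by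
  have := h.range_pos ht; have := h.speed_pos; have := h.gain_pos; positivity

theorem mul_sin_div_neg (h : IsStandoffTrajectory V r_d k r θ) {t : ℝ} (ht : 0 ≤ t)
    (hθt : θ t ∈ Ioo (-π) 0) : V * sin (θ t) / r t < 0 :=
  div_neg_of_neg_of_pos
    (mul_neg_of_pos_of_neg h.speed_pos (sin_neg_of_neg_of_neg_pi_lt hθt.2 hθt.1)) (h.range_pos ht)

theorem sin_nonneg_of_le (h : IsStandoffTrajectory V r_d k r θ) {t₀ : ℝ} (ht₀ : 0 ≤ t₀)
    (hsin : 0 ≤ sin (θ t₀)) {t : ℝ} (ht : t₀ ≤ t) : 0 ≤ sin (θ t) := by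
  have hbarrier := image_le_of_deriv_neg_boundary (f := fun t => -sin (θ t)) (B := 0)
    (fun t ht => ((h.hasDerivAt_bearing t (ht₀.trans ht)).sin).neg) (by simpa using hsin)
    (fun t ht hzero => by
      have ht' := ht₀.trans ht
      have hsin0 : sin (θ t) = 0 := neg_eq_zero.mp hzero
      have hcos_sq : cos (θ t) ^ 2 = 1 := by nlinarith [sin_sq_add_cos_sq (θ t)]
      have hs := h.sqrt_lt_one ht'
      have hP : 0 < 2 * k * r t * V := by
        have := h.range_pos ht'; have := h.speed_pos; have := h.gain_pos; positivity
      have hcs : cos (θ t) * √(1 - (r_d / r t) ^ 2) < 1 := by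
        nlinarith [cos_le_one (θ t), sqrt_nonneg (1 - (r_d / r t) ^ 2)]
      rw [hsin0, mul_zero, zero_div, add_zero]
      linear_combination (-(2 * k * r t * V)) * hcos_sq + mul_pos hP (sub_pos.2 hcs))
    t ht
  simpa using hbarrier

theorem sub_int_mul_two_pi (h : IsStandoffTrajectory V r_d k r θ) (m : ℤ) :
    IsStandoffTrajectory V r_d k r (fun t => θ t - m * (2 * π)) where
  __ := h
  hasDerivAt_range t ht := by simpa only [cos_sub_int_mul_two_pi] using h.hasDerivAt_range t ht
  hasDerivAt_bearing t ht := by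
    simpa only [cos_sub_int_mul_two_pi, sin_sub_int_mul_two_pi] using
      (h.hasDerivAt_bearing t ht).sub_const _

theorem neg_half_lt_cos (h : IsStandoffTrajectory V r_d k r θ)
    (hθ : ∀ t, 0 ≤ t → θ t ∈ Ioo (-π) 0) {t : ℝ} (ht : 0 ≤ t) : -(1 / 2) < cos (θ t) := by
  have hV := h.speed_pos
  have hk := h.gain_pos
  have hsin : ∀ t, 0 ≤ t → sin (θ t) < 0 := fun t ht =>
    sin_neg_of_neg_of_neg_pi_lt (hθ t ht).2 (hθ t ht).1
  by_contra! hle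
  have htrap := image_le_of_deriv_neg_boundary (f := fun t => cos (θ t)) (B := -(1 / 2))
    (fun s hs => (h.hasDerivAt_bearing s (ht.trans hs)).cos) hle (fun s hs hcos => by
      have hs' := ht.trans hs
      have hP : 0 < 2 * k * r s * V := by have := h.range_pos hs'; positivity
      have hθ' : 2 * k * r s * V * (cos (θ s) - √(1 - (r_d / r s) ^ 2))
          + V * sin (θ s) / r s < 0 := by
        rw [hcos]
        nlinarith [h.mul_sin_div_neg hs' (hθ s hs'), sqrt_nonneg (1 - (r_d / r s) ^ 2)]
      nlinarith [hsin s hs'])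
  obtain ⟨T, hT, hθT⟩ := exists_lt_of_deriv_le_neg (mul_pos (mul_pos hk h.radius_pos) hV)
    (fun s hs => h.hasDerivAt_bearing s (ht.trans hs)) (fun s hs => by
      have hs' := ht.trans hs
      have hcos : cos (θ s) ≤ -(1 / 2) := htrap s hs
      have hP : 0 ≤ 2 * k * r s * V := by have := h.range_pos hs'; positivity
      have hturn : 2 * k * r s * V * (cos (θ s) - √(1 - (r_d / r s) ^ 2))
          ≤ 2 * k * r s * V * -(1 / 2) :=
        mul_le_mul_of_nonneg_left (by linarith [sqrt_nonneg (1 - (r_d / r s) ^ 2)]) hP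
      have hrd := mul_le_mul_of_nonneg_left (h.radius_le s hs') (mul_pos hk hV).le
      nlinarith [h.mul_sin_div_neg hs' (hθ s hs')]) (-π)
  exact (hθ T (ht.trans hT)).1.not_gt hθT

theorem hasDerivAt_add_mul_sq (h : IsStandoffTrajectory V r_d k r θ) {t : ℝ} (ht : 0 ≤ t) :
    HasDerivAt (fun t => θ t + k * r t ^ 2)
      (V * sin (θ t) / r t - 2 * k * r t * V * √(1 - (r_d / r t) ^ 2)) t := by
  refine ((h.hasDerivAt_bearing t ht).add
    (((h.hasDerivAt_range t ht).pow 2).const_mul k)).congr_deriv ?_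
  norm_num
  ring

theorem exists_range_le (h : IsStandoffTrajectory V r_d k r θ)
    (hθ : ∀ t, 0 ≤ t → θ t ∈ Ioo (-π) 0) : ∃ R, ∀ t, 0 ≤ t → r t ≤ R := by
  refine ⟨√((θ 0 + k * r 0 ^ 2 + π) / k), fun t ht => (le_abs_self _).trans (abs_le_sqrt ?_)⟩
  have hL := image_le_sub_mul_of_deriv_le (c := 0) (fun t ht => h.hasDerivAt_add_mul_sq ht)
    (fun t ht => by linarith [h.mul_sin_div_neg ht (hθ t ht), h.mul_sqrt_nonneg ht]) t ht
  rw [le_div_iff₀' h.gain_pos]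
  linarith [(hθ t ht).1]

theorem not_forall_mem_Ioo (h : IsStandoffTrajectory V r_d k r θ) :
    ¬ ∀ t, 0 ≤ t → θ t ∈ Ioo (-π) 0 := by
  intro hθ
  have hV := h.speed_pos
  obtain ⟨R, hR⟩ := h.exists_range_le hθ
  have hRpos : 0 < R := (h.range_pos le_rfl).trans_le (hR 0 le_rfl)
  obtain ⟨T, hT, hNT⟩ := exists_lt_of_deriv_le_neg (half_pos hV)
    (f := fun t => 2 * R * (θ t + k * r t ^ 2) + r t)
    (fun t ht => ((h.hasDerivAt_add_mul_sq ht).const_mul (2 * R)).add (h.hasDerivAt_range t ht))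
    (fun t ht => by
      have hr := h.range_pos ht
      have hsin := sin_neg_of_neg_of_neg_pi_lt (hθ t ht).2 (hθ t ht).1
      have hcos := h.neg_half_lt_cos hθ ht
      have hs := h.mul_sqrt_nonneg ht
      -- where `cos θ ≤ 1/2` we have `sin θ ≤ -3/4`, and otherwise `r' < -V/2`
      rcases le_or_gt (cos (θ t)) (1 / 2) with hcos' | hcos'
      · have hsin' : sin (θ t) ≤ -(3 / 4) := by nlinarith [sin_sq_add_cos_sq (θ t)]
        have : 2 * R * (V * sin (θ t) / r t) ≤ -(3 / 2 * V) := by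
          rw [mul_div_assoc', div_le_iff₀ hr]
          nlinarith [mul_nonpos_of_nonneg_of_nonpos (mul_pos hRpos hV).le
            (show sin (θ t) + 3 / 4 ≤ 0 by linarith), mul_nonneg hV.le (sub_nonneg.2 (hR t ht))]
        nlinarith
      · nlinarith [h.mul_sin_div_neg ht (hθ t ht)])
    (-(2 * R * π))
  have := h.range_pos hT
  have : 0 ≤ k * r T ^ 2 := by have := h.gain_pos; positivity
  nlinarith [(hθ T hT).1]

theorem exists_sin_nonneg (h : IsStandoffTrajectory V r_d k r θ) :
    ∃ t, 0 ≤ t ∧ 0 ≤ sin (θ t) := by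
  by_contra! hneg
  have hcont : ContinuousOn θ (Ici 0) := fun t ht =>
    (h.hasDerivAt_bearing t ht).continuousAt.continuousWithinAt
  obtain ⟨m, hm⟩ := (isPreconnected_Ici.image θ hcont).exists_forall_sub_int_mul_two_pi_mem_Ioo
    (mem_image_of_mem θ self_mem_Ici) (by rintro _ ⟨t, ht, rfl⟩; exact hneg t ht)
  exact (h.sub_int_mul_two_pi m).not_forall_mem_Ioo fun t ht => hm _ (mem_image_of_mem θ ht)

end IsStandoffTrajectory

theorem bearing_eventually_in_upper_half_general
    (V r_d k : ℝ) (r θ : ℝ → ℝ)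
    (hV : 0 < V) (hrd : 0 < r_d) (hk : 0 < k)
    (hr : ∀ t, 0 ≤ t → r_d ≤ r t)
    (hr' : ∀ t, 0 ≤ t → HasDerivAt r (-V * Real.cos (θ t)) t)
    (hθ' : ∀ t, 0 ≤ t → HasDerivAt θ
      (2 * k * r t * V * (Real.cos (θ t) - Real.sqrt (1 - (r_d / r t) ^ 2))
        + V * Real.sin (θ t) / r t) t) :
    ∃ tstar : ℝ, 0 ≤ tstar ∧ ∀ t, tstar ≤ t → 0 ≤ Real.sin (θ t) := by
  have h : IsStandoffTrajectory V r_d k r θ := ⟨hV, hrd, hk, hr, hr', hθ'⟩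
  obtain ⟨t₀, ht₀, hsin⟩ := h.exists_sin_nonneg
  exact ⟨t₀, ht₀, fun _ ht => h.sin_nonneg_of_le ht₀ hsin ht⟩

theorem bearing_eventually_in_upper_half
    (V r_d k : ℝ) (r θ : ℝ → ℝ)
    (hV : 0 < V) (hrd : 0 < r_d) (hk : 0 < k)
    (hr : ∀ t, 0 ≤ t → r_d ≤ r t)
    (hbdd : ∀ a b : ℝ, ∃ M : ℝ, ∀ t ∈ Set.Icc a b, |r t| ≤ M)
    (hr' : ∀ t, 0 ≤ t → HasDerivAt r (-V * Real.cos (θ t)) t)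
    (hθ' : ∀ t, 0 ≤ t → HasDerivAt θ
      (2 * k * r t * V * (Real.cos (θ t) - Real.sqrt (1 - (r_d / r t) ^ 2))
        + V * Real.sin (θ t) / r t) t) :
    ∃ tstar : ℝ, 0 ≤ tstar ∧ ∀ t, tstar ≤ t → 0 ≤ Real.sin (θ t) :=
  bearing_eventually_in_upper_half_general V r_d k r θ hV hrd hk hr hr' hθ'
end

section
/- Let r_d > 0, k > 1/(2·r_d²), and let r_a := √((r_d² + √(r_d⁴ + 1/k²))/2). Define φ(ρ) := ∫_{r_a}^{ρ} (1/r_a − 1/z + 2·k·z·√(1 − (r_d/z)²) − 2·k·r_a·√(1 − (r_d/r_a)²)) dz for ρ ≥ r_d. Then φ(ρ) ≥ 0 for every ρ ≥ r_d, with φ(r_a) = 0. -/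
open Real intervalIntegral

theorem lyapunov_radial_part_nonneg (r_d k : ℝ) (hrd : 0 < r_d)
    (hk : 1 / (2 * r_d ^ 2) < k) :
    let r_a := Real.sqrt ((r_d ^ 2 + Real.sqrt (r_d ^ 4 + 1 / k ^ 2)) / 2)
    let φ : ℝ → ℝ := fun ρ => ∫ z in r_a..ρ,
      (1 / r_a - 1 / z + 2 * k * z * Real.sqrt (1 - (r_d / z) ^ 2)
        - 2 * k * r_a * Real.sqrt (1 - (r_d / r_a) ^ 2))
    (∀ ρ : ℝ, r_d ≤ ρ → 0 ≤ φ ρ) ∧ φ r_a = 0 := by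
  intro r_a φ
  have hk0 : 0 < k := lt_trans (by positivity) hk
  set s := Real.sqrt (r_d ^ 4 + 1 / k ^ 2) with hs
  have hssq : s ^ 2 = r_d ^ 4 + 1 / k ^ 2 := Real.sq_sqrt (by positivity)
  have hs0 : 0 ≤ s := Real.sqrt_nonneg _
  have hik : 0 < 1 / k ^ 2 := by positivity
  have hsd : r_d ^ 2 < s := by nlinarith [hik]
  have ha2 : r_a ^ 2 = (r_d ^ 2 + s) / 2 := Real.sq_sqrt (by nlinarith)
  have hra_pos : 0 < r_a := Real.sqrt_pos.mpr (by nlinarith)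
  clear_value s
  have hrd_lt_ra : r_d < r_a := by nlinarith
  have h1 : k ^ 2 * s ^ 2 = k ^ 2 * r_d ^ 4 + 1 := by
    rw [hssq]; field_simp
  have hkey : 4 * k ^ 2 * r_a ^ 2 * (r_a ^ 2 - r_d ^ 2) = 1 := by
    rw [ha2]; linear_combination h1
  have hsq : Real.sqrt (r_a ^ 2 - r_d ^ 2) = 1 / (2 * k * r_a) := by
    rw [show r_a ^ 2 - r_d ^ 2 = (1 / (2 * k * r_a)) ^ 2 by
      field_simp; nlinarith [hkey]]
    exact Real.sqrt_sq (by positivity)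
  have hsqz : ∀ z : ℝ, 0 < z → Real.sqrt (1 - (r_d / z) ^ 2)
      = Real.sqrt (z ^ 2 - r_d ^ 2) / z := by
    intro z hz
    rw [show 1 - (r_d / z) ^ 2 = (z ^ 2 - r_d ^ 2) / z ^ 2 by field_simp,
      Real.sqrt_div' _ (by positivity : (0:ℝ) ≤ z ^ 2), Real.sqrt_sq hz.le]
  have hc : 2 * k * r_a * Real.sqrt (1 - (r_d / r_a) ^ 2) = 1 / r_a := by
    rw [hsqz r_a hra_pos, hsq]
    field_simp
  have hpt : ∀ z : ℝ, r_d ≤ z →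
      (1 / r_a - 1 / z + 2 * k * z * Real.sqrt (1 - (r_d / z) ^ 2)
        - 2 * k * r_a * Real.sqrt (1 - (r_d / r_a) ^ 2))
      = 2 * k * Real.sqrt (z ^ 2 - r_d ^ 2) - 1 / z := by
    intro z hz
    have hz0 : 0 < z := lt_of_lt_of_le hrd hz
    rw [hc, hsqz z hz0]
    field_simp
    ring
  have h2k : 2 * k * (1 / (2 * k * r_a)) = 1 / r_a := by field_simp
  have hge : ∀ z : ℝ, r_a ≤ z → 0 ≤ 2 * k * Real.sqrt (z ^ 2 - r_d ^ 2) - 1 / z := by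
    intro z hz
    have hz0 : 0 < z := lt_of_lt_of_le hra_pos hz
    have h1 : 1 / (2 * k * r_a) ≤ Real.sqrt (z ^ 2 - r_d ^ 2) := by
      rw [← hsq]; exact Real.sqrt_le_sqrt (by nlinarith)
    have h2 : 1 / z ≤ 1 / r_a := one_div_le_one_div_of_le hra_pos hz
    have h4 := mul_le_mul_of_nonneg_left h1 (by positivity : (0:ℝ) ≤ 2 * k)
    linarith [h2k]
  have hle : ∀ z : ℝ, r_d ≤ z → z ≤ r_a →
      2 * k * Real.sqrt (z ^ 2 - r_d ^ 2) - 1 / z ≤ 0 := by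
    intro z hz hz'
    have hz0 : 0 < z := lt_of_lt_of_le hrd hz
    have h1 : Real.sqrt (z ^ 2 - r_d ^ 2) ≤ 1 / (2 * k * r_a) := by
      rw [← hsq]; exact Real.sqrt_le_sqrt (by nlinarith)
    have h2 : 1 / r_a ≤ 1 / z := one_div_le_one_div_of_le hz0 hz'
    have h4 := mul_le_mul_of_nonneg_left h1 (by positivity : (0:ℝ) ≤ 2 * k)
    linarith [h2k]
  constructor
  · intro ρ hρ
    show 0 ≤ ∫ z in r_a..ρ, _
    rcases le_or_gt r_a ρ with h | h
    · apply intervalIntegral.integral_nonneg h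
      intro u hu
      rw [hpt u (le_trans hrd_lt_ra.le hu.1)]
      exact hge u hu.1
    · rw [intervalIntegral.integral_symm, ← intervalIntegral.integral_neg]
      apply intervalIntegral.integral_nonneg h.le
      intro u hu
      rw [hpt u (le_trans hρ hu.1)]
      simpa using hle u (le_trans hρ hu.1) hu.2
  · exact intervalIntegral.integral_same
end

section
/- Let V > 0, r_d > 0, k > 1/(2·r_d²), r ≥ r_d, and θ ∈ [0, π]. Then V·cos θ·(−2·k·r·cos θ − sin θ/r + 1/r) ≤ 0, and equality holds if and only if θ = π/2. -/
open Real

theorem lyapunov_derivative_nonpos (V r_d k r θ : ℝ)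
    (hV : 0 < V) (hrd : 0 < r_d) (hk : 1 / (2 * r_d ^ 2) < k)
    (hr : r_d ≤ r) (hθ : θ ∈ Set.Icc 0 π) :
    V * Real.cos θ * (-(2 * k * r * Real.cos θ) - Real.sin θ / r + 1 / r) ≤ 0 ∧
      (V * Real.cos θ * (-(2 * k * r * Real.cos θ) - Real.sin θ / r + 1 / r) = 0 ↔
        θ = π / 2) := by
  obtain ⟨h0, h1⟩ := hθ
  have hr0 : 0 < r := lt_of_lt_of_le hrd hr
  have hs : 0 ≤ Real.sin θ := Real.sin_nonneg_of_nonneg_of_le_pi h0 h1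
  have hs1 : Real.sin θ ≤ 1 := Real.sin_le_one θ
  have hpy : Real.sin θ ^ 2 + Real.cos θ ^ 2 = 1 := Real.sin_sq_add_cos_sq θ
  have hkr : 1 < 2 * k * r ^ 2 := by
    have hrd2 : (0:ℝ) < 2 * r_d ^ 2 := by positivity
    have hk' : 1 < k * (2 * r_d ^ 2) := (div_lt_iff₀ hrd2).mp hk
    have hk0 : 0 < k := by nlinarith
    nlinarith [mul_nonneg hk0.le (mul_nonneg (sub_nonneg.mpr hr) (by linarith : (0:ℝ) ≤ r + r_d))]
  have key : Real.cos θ ≠ 0 →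
      V * Real.cos θ * (-(2 * k * r * Real.cos θ) - Real.sin θ / r + 1 / r) < 0 := by
    intro hc
    have hc2 : 0 < Real.cos θ ^ 2 := by positivity
    have hcle : Real.cos θ * (1 - Real.sin θ) ≤ Real.cos θ ^ 2 := by
      rcases le_or_gt (Real.cos θ) 0 with h | h
      · nlinarith
      · nlinarith
    have hstep : -(2 * k * r * Real.cos θ) - Real.sin θ / r + 1 / r
        = (-(2 * k * r ^ 2 * Real.cos θ) + (1 - Real.sin θ)) / r := by
      field_simp; ring
    rw [hstep]
    have : Real.cos θ * (-(2 * k * r ^ 2 * Real.cos θ) + (1 - Real.sin θ)) < 0 := by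
      nlinarith
    have := mul_neg_of_pos_of_neg hV (div_neg_of_neg_of_pos this hr0)
    calc V * Real.cos θ * ((-(2 * k * r ^ 2 * Real.cos θ) + (1 - Real.sin θ)) / r)
        = V * (Real.cos θ * (-(2 * k * r ^ 2 * Real.cos θ) + (1 - Real.sin θ)) / r) := by ring
      _ < 0 := this
  constructor
  · rcases eq_or_ne (Real.cos θ) 0 with hc | hc
    · simp [hc]
    · exact (key hc).le
  · constructor
    · intro h
      have hc : Real.cos θ = 0 := by
        by_contra hc
        exact absurd h (ne_of_lt (key hc))
      have : Real.cos θ = Real.cos (π / 2) := by simp [hc]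
      have hmem : π / 2 ∈ Set.Icc 0 π := by
        constructor <;> nlinarith [Real.pi_pos]
      exact Real.injOn_cos ⟨h0, h1⟩ hmem this
    · intro h
      simp [h]
end

section
/- Let V > 0, r_d > 0, k > V/r_d, and let r, θ : ℝ → ℝ be differentiable functions satisfying for all t ≥ t₀: r(t) ≥ r_d, θ(t) ∈ [0, π], r'(t) = −V·cos θ(t), and θ'(t) = k·sign(cos θ(t) − √(1 − (r_d/r(t))²)) + V·sin θ(t)/r(t). Then there exists t̄ ≥ t₀ such that θ(t) ∈ [0, π/2] for all t ≥ t̄. -/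
/-!
While the bearing lies in `(π/2, π]`, its cosine is negative, so the saturated law turns at
rate `-k`, and the gyroscopic term `V sin θ / r` is at most `V / r_d`: the bearing decreases at
rate at least `k - V / r_d > 0`. A function that decreases at a uniform rate whenever it exceeds
a level drops below that level in finite time, and can never rise above it again.
-/

open Real Set

section SublevelSet

variable {f f' : ℝ → ℝ} {t₀ L : ℝ}

theorem add_mul_le_of_deriv_le_neg_above {c s t : ℝ}
    (hf : ∀ u, t₀ ≤ u → HasDerivAt f (f' u) u) (hf' : ∀ u, t₀ ≤ u → L < f u → f' u ≤ -c)
    (hs : t₀ ≤ s) (hst : s ≤ t) (habove : ∀ u ∈ Ioo s t, L < f u) :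
    f t + c * t ≤ f s + c * s := by
  have hderiv : ∀ u ∈ Icc s t, HasDerivAt f (f' u) u := fun u hu => hf u (hs.trans hu.1)
  have hrate := (convex_Icc s t).image_sub_le_mul_sub_of_deriv_le
    (fun u hu => (hderiv u hu).continuousAt.continuousWithinAt)
    (fun u hu => (hderiv u (interior_subset hu)).differentiableAt.differentiableWithinAt)
    (C := -c) (fun u hu => by
      rw [interior_Icc] at hu
      rw [(hderiv u (Ioo_subset_Icc_self hu)).deriv]
      exact hf' u (hs.trans hu.1.le) (habove u hu))
    s (left_mem_Icc.2 hst) t (right_mem_Icc.2 hst) hst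
  linarith

theorem le_of_le_of_deriv_nonpos_above (hf : ∀ u, t₀ ≤ u → HasDerivAt f (f' u) u)
    (hf' : ∀ u, t₀ ≤ u → L < f u → f' u ≤ 0) {s t : ℝ} (hs : t₀ ≤ s) (hfs : f s ≤ L)
    (hst : s ≤ t) : f t ≤ L := by
  by_contra! hft
  -- `sSup S` is the last time before `t` at which `f` is still below the level
  set S := Icc s t ∩ f ⁻¹' Iic L
  have hScont : ContinuousOn f (Icc s t) := fun u hu =>
    (hf u (hs.trans hu.1)).continuousAt.continuousWithinAt
  have hmS : sSup S ∈ S :=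
    (hScont.preimage_isClosed_of_isClosed isClosed_Icc isClosed_Iic).csSup_mem
      ⟨s, ⟨le_rfl, hst⟩, hfs⟩ ⟨t, fun u hu => hu.1.2⟩
  have habove : ∀ u ∈ Ioo (sSup S) t, L < f u := fun u hu => by
    by_contra! hfu
    exact hu.1.not_ge (le_csSup ⟨t, fun v hv => hv.1.2⟩
      ⟨⟨hmS.1.1.trans hu.1.le, hu.2.le⟩, hfu⟩)
  have hdecr := add_mul_le_of_deriv_le_neg_above (c := 0) hf (by simpa using hf')
    (hs.trans hmS.1.1) hmS.1.2 habove
  have hfm : f (sSup S) ≤ L := hmS.2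
  linarith

theorem exists_le_of_deriv_le_neg_above {c : ℝ} (hc : 0 < c)
    (hf : ∀ u, t₀ ≤ u → HasDerivAt f (f' u) u) (hf' : ∀ u, t₀ ≤ u → L < f u → f' u ≤ -c) :
    ∃ s, t₀ ≤ s ∧ f s ≤ L := by
  by_contra! habove
  -- descending at rate `c`, `f` would lose its excess `f t₀ - L` by time `t₀ + (f t₀ - L) / c`
  have hT : t₀ ≤ t₀ + (f t₀ - L) / c := by
    linarith [div_pos (sub_pos.2 (habove t₀ le_rfl)) hc]
  have hdecr := add_mul_le_of_deriv_le_neg_above hf hf' le_rfl hT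
    (fun u hu => habove u hu.1.le)
  have hcancel : c * ((f t₀ - L) / c) = f t₀ - L := mul_div_cancel₀ _ hc.ne'
  linarith [habove _ hT]

theorem eventually_le_of_deriv_le_neg_above {c : ℝ} (hc : 0 < c)
    (hf : ∀ u, t₀ ≤ u → HasDerivAt f (f' u) u) (hf' : ∀ u, t₀ ≤ u → L < f u → f' u ≤ -c) :
    ∃ s, t₀ ≤ s ∧ ∀ t, s ≤ t → f t ≤ L := by
  obtain ⟨s, hs, hfs⟩ := exists_le_of_deriv_le_neg_above hc hf hf'
  exact ⟨s, hs, fun t hst => le_of_le_of_deriv_nonpos_above hf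
    (fun u hu hfu => (hf' u hu hfu).trans (neg_nonpos.2 hc.le)) hs hfs hst⟩

end SublevelSet

theorem saturated_turn_rate_le_of_mem_Ioc {V r_d k r θ : ℝ} (hV : 0 ≤ V) (hrd : 0 < r_d)
    (hr : r_d ≤ r) (hθ : θ ∈ Ioc (π / 2) π) :
    k * sign (cos θ - √(1 - (r_d / r) ^ 2)) + V * sin θ / r ≤ -(k - V / r_d) := by
  have hcos : cos θ < 0 := cos_neg_of_pi_div_two_lt_of_lt hθ.1 (by linarith [hθ.2, pi_pos])
  have hsign : sign (cos θ - √(1 - (r_d / r) ^ 2)) = -1 :=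
    sign_of_neg (by linarith [sqrt_nonneg (1 - (r_d / r) ^ 2)])
  have hsin : 0 ≤ sin θ ∧ sin θ ≤ 1 :=
    ⟨sin_nonneg_of_nonneg_of_le_pi (by linarith [hθ.1, pi_pos]) hθ.2, sin_le_one θ⟩
  have hgyro : V * sin θ / r ≤ V / r_d :=
    div_le_div₀ hV (mul_le_of_le_one_right hV hsin.2) hrd hr
  rw [hsign]
  linarith

theorem saturated_law_bearing_reaches_first_quadrant_general
    (V r_d k t₀ : ℝ) (r θ : ℝ → ℝ)
    (hV : 0 < V) (hrd : 0 < r_d) (hk : V / r_d < k)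
    (hr : ∀ t, t₀ ≤ t → r_d ≤ r t)
    (hθrange : ∀ t, t₀ ≤ t → θ t ∈ Set.Icc 0 π)
    (hθ' : ∀ t, t₀ ≤ t → HasDerivAt θ
      (k * Real.sign (Real.cos (θ t) - Real.sqrt (1 - (r_d / r t) ^ 2))
        + V * Real.sin (θ t) / r t) t) :
    ∃ tbar : ℝ, t₀ ≤ tbar ∧ ∀ t, tbar ≤ t → θ t ∈ Set.Icc 0 (π / 2) := by
  obtain ⟨tbar, htbar, hθle⟩ := eventually_le_of_deriv_le_neg_above (sub_pos.2 hk) hθ'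
    fun t ht hθt => saturated_turn_rate_le_of_mem_Ioc hV.le hrd (hr t ht) ⟨hθt, (hθrange t ht).2⟩
  exact ⟨tbar, htbar, fun t ht => ⟨(hθrange t (htbar.trans ht)).1, hθle t ht⟩⟩

theorem saturated_law_bearing_reaches_first_quadrant
    (V r_d k t₀ : ℝ) (r θ : ℝ → ℝ)
    (hV : 0 < V) (hrd : 0 < r_d) (hk : V / r_d < k)
    (hr : ∀ t, t₀ ≤ t → r_d ≤ r t)
    (hθrange : ∀ t, t₀ ≤ t → θ t ∈ Set.Icc 0 π)
    (hr' : ∀ t, t₀ ≤ t → HasDerivAt r (-V * Real.cos (θ t)) t)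
    (hθ' : ∀ t, t₀ ≤ t → HasDerivAt θ
      (k * Real.sign (Real.cos (θ t) - Real.sqrt (1 - (r_d / r t) ^ 2))
        + V * Real.sin (θ t) / r t) t) :
    ∃ tbar : ℝ, t₀ ≤ tbar ∧ ∀ t, tbar ≤ t → θ t ∈ Set.Icc 0 (π / 2) :=
  saturated_law_bearing_reaches_first_quadrant_general V r_d k t₀ r θ hV hrd hk hr hθrange hθ'
end

section
/- Let V > 0, r_d > 0, k > V/r_d, and let r, θ : ℝ → ℝ be differentiable functions satisfying for all t ≥ t̄: r(t) ≥ r_d, θ(t) ∈ [0, π/2], r'(t) = −V·cos θ(t), and θ'(t) = k·sign(cos θ(t) − √(1 − (r_d/r(t))²)) + V·sin θ(t)/r(t). Then r(t) → r_d and θ(t) → π/2 as t → ∞. -/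
/-!
The range is nonincreasing (`r' = -V cos θ ≤ 0`) and bounded below by `r_d`, so it converges to
some `L ≥ r_d`. Since `θ' ≤ k + V / r_d`, `cos θ` can only decrease at a bounded rate, so values of
`cos θ` bounded away from zero at arbitrarily late times would force `r` to keep dropping by a
definite amount; hence `cos θ → 0`, i.e. `θ → π / 2`. If `L > r_d`, then eventually
`cos θ < √(1 - (r_d / r)²)`, the control saturates at `-k` and `θ' ≤ -(k - V / r_d) < 0`, which is
incompatible with `θ → π / 2`.
-/

open Real Filter Set Topology

theorem sub_le_mul_sub_of_hasDerivAt_le {f f' : ℝ → ℝ} {x y C : ℝ} (hxy : x ≤ y)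
    (hf : ∀ t ∈ Icc x y, HasDerivAt f (f' t) t) (hle : ∀ t ∈ Icc x y, f' t ≤ C) :
    f y - f x ≤ C * (y - x) :=
  (convex_Icc x y).image_sub_le_mul_sub_of_deriv_le
    (fun t ht => (hf t ht).continuousAt.continuousWithinAt)
    (fun t ht => (hf t (interior_subset ht)).differentiableAt.differentiableWithinAt)
    (fun t ht => (hf t (interior_subset ht)).deriv ▸ hle t (interior_subset ht))
    x (left_mem_Icc.2 hxy) y (right_mem_Icc.2 hxy) hxy

theorem exists_tendsto_of_hasDerivAt_nonpos {f f' : ℝ → ℝ} {a b : ℝ}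
    (hf : ∀ t, a ≤ t → HasDerivAt f (f' t) t) (hf' : ∀ t, a ≤ t → f' t ≤ 0)
    (hb : ∀ t, a ≤ t → b ≤ f t) :
    ∃ L, Tendsto f atTop (𝓝 L) := by
  have hanti : AntitoneOn f (Ici a) := fun x hx y _ hxy => by
    linarith [sub_le_mul_sub_of_hasDerivAt_le hxy (fun t ht => hf t (le_trans hx ht.1))
      fun t ht => hf' t (le_trans hx ht.1)]
  exact ⟨_, tendsto_comp_val_Ici_atTop.1 <| tendsto_atTop_ciInf (f := fun x : Ici a => f x)
    (fun x y hxy => hanti x.2 y.2 hxy) ⟨b, forall_mem_range.2 fun x => hb x x.2⟩⟩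

theorem tendsto_atBot_of_hasDerivAt_le_neg {f f' : ℝ → ℝ} {m : ℝ} (hm : 0 < m)
    (hf : ∀ᶠ t in atTop, HasDerivAt f (f' t) t) (hle : ∀ᶠ t in atTop, f' t ≤ -m) :
    Tendsto f atTop atBot := by
  obtain ⟨a, ha⟩ := eventually_atTop.1 (hf.and hle)
  have hlin : Tendsto (fun t => f a + -m * (t - a)) atTop atBot :=
    tendsto_atBot_add_const_left _ _ <|
      (tendsto_atTop_add_const_right _ (-a) tendsto_id).const_mul_atTop_of_neg (by linarith)
  refine tendsto_atBot_mono' _ ?_ hlin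
  filter_upwards [eventually_ge_atTop a] with t hat
  linarith [sub_le_mul_sub_of_hasDerivAt_le hat (fun s hs => (ha s hs.1).1)
    (fun s hs => (ha s hs.1).2)]

theorem tendsto_zero_of_tendsto_of_hasDerivAt_neg {g h : ℝ → ℝ} {a K L : ℝ} (hK : 0 < K)
    (hg : Tendsto g atTop (𝓝 L)) (hderiv : ∀ t, a ≤ t → HasDerivAt g (-h t) t)
    (h_nonneg : ∀ t, a ≤ t → 0 ≤ h t)
    (h_lower : ∀ s t, a ≤ s → s ≤ t → h s - K * (t - s) ≤ h t) :
    Tendsto h atTop (𝓝 0) := by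
  refine tendsto_order.2 ⟨fun b hb => ?_, fun ε hε => ?_⟩
  · filter_upwards [eventually_ge_atTop a] with t hat using hb.trans_le (h_nonneg t hat)
  set δ := ε / (2 * K)
  have hδ : 0 < δ := by positivity
  have hKδ : K * δ = ε / 2 := by simp only [δ]; field_simp
  have hdecr : Tendsto (fun t => g t - g (t + δ)) atTop (𝓝 0) := by
    simpa using hg.sub (hg.comp (tendsto_atTop_add_const_right _ δ tendsto_id))
  filter_upwards [eventually_ge_atTop a, hdecr.eventually (eventually_lt_nhds (by positivity :
    (0 : ℝ) < ε / 2 * δ))] with t hat ht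
  by_contra! hεt
  -- On `[t, t + δ]` the lower Lipschitz bound keeps `h ≥ ε / 2`, so `g` drops by `ε δ / 2`.
  have hdrop := sub_le_mul_sub_of_hasDerivAt_le (C := -(ε / 2)) (by linarith : t ≤ t + δ)
    (fun s hs => hderiv s (hat.trans hs.1)) fun s hs => by
      nlinarith [h_lower t s hat hs.1, hs.2]
  nlinarith

theorem tendsto_of_tendsto_cos {α : Type*} {l : Filter α} {θ : α → ℝ} {c : ℝ}
    (hθ : ∀ᶠ t in l, θ t ∈ Icc 0 π) (hcos : Tendsto (fun t => cos (θ t)) l (𝓝 c)) :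
    Tendsto θ l (𝓝 (arccos c)) :=
  (continuous_arccos.tendsto c |>.comp hcos).congr' (hθ.mono fun _ ht => arccos_cos ht.1 ht.2)

theorem cos_sub_mul_le_cos_of_hasDerivAt_le {θ θ' : ℝ → ℝ} {K s t : ℝ} (hK : 0 ≤ K)
    (hst : s ≤ t) (hθ : ∀ u ∈ Icc s t, θ u ∈ Icc 0 π)
    (hderiv : ∀ u ∈ Icc s t, HasDerivAt θ (θ' u) u) (hle : ∀ u ∈ Icc s t, θ' u ≤ K) :
    cos (θ s) - K * (t - s) ≤ cos (θ t) := by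
  have := sub_le_mul_sub_of_hasDerivAt_le (f := fun u => -cos (θ u)) (C := K) hst
    (fun u hu => ((hasDerivAt_cos _).comp u (hderiv u hu)).neg) fun u hu => by
      have hsin : sin (θ u) ∈ Icc 0 1 :=
        ⟨sin_nonneg_of_nonneg_of_le_pi (hθ u hu).1 (hθ u hu).2, sin_le_one _⟩
      simp only [neg_mul, neg_neg]
      rcases le_total 0 (θ' u) with h | h
      · nlinarith [hle u hu, hsin.1, hsin.2]
      · nlinarith [hsin.1]
  linarith

theorem eventually_sub_sqrt_one_sub_div_sq_neg {α : Type*} {l : Filter α} {c r : α → ℝ}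
    {r_d L : ℝ} (hrd : 0 < r_d) (hlt : r_d < L) (hr : Tendsto r l (𝓝 L))
    (hc : Tendsto c l (𝓝 0)) :
    ∀ᶠ t in l, c t - √(1 - (r_d / r t) ^ 2) < 0 := by
  have hL0 : 0 < L := hrd.trans hlt
  have hlim : Tendsto (fun t => c t - √(1 - (r_d / r t) ^ 2)) l
      (𝓝 (0 - √(1 - (r_d / L) ^ 2))) :=
    hc.sub ((tendsto_const_nhds.div hr hL0.ne').pow 2 |>.const_sub 1 |>.sqrt)
  exact hlim.eventually <| eventually_lt_nhds <| sub_neg.2 <| sqrt_pos.2 <| sub_pos.2 <|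
    pow_lt_one₀ (div_pos hrd hL0).le ((div_lt_one hL0).2 hlt) two_ne_zero

theorem Real.sign_le_one (x : ℝ) : Real.sign x ≤ 1 := by
  rcases Real.sign_apply_eq x with h | h | h <;> rw [h] <;> norm_num

theorem mul_sin_div_le_div {V r_d ρ x : ℝ} (hV : 0 ≤ V) (hrd : 0 < r_d) (hρ : r_d ≤ ρ) :
    V * sin x / ρ ≤ V / r_d :=
  div_le_div₀ hV (mul_le_of_le_one_right hV (sin_le_one x)) hrd hρ

theorem saturated_law_convergence
    (V r_d k tbar : ℝ) (r θ : ℝ → ℝ)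
    (hV : 0 < V) (hrd : 0 < r_d) (hk : V / r_d < k)
    (hr : ∀ t, tbar ≤ t → r_d ≤ r t)
    (hθrange : ∀ t, tbar ≤ t → θ t ∈ Set.Icc 0 (π / 2))
    (hr' : ∀ t, tbar ≤ t → HasDerivAt r (-V * Real.cos (θ t)) t)
    (hθ' : ∀ t, tbar ≤ t → HasDerivAt θ
      (k * Real.sign (Real.cos (θ t) - Real.sqrt (1 - (r_d / r t) ^ 2))
        + V * Real.sin (θ t) / r t) t) :
    Tendsto r atTop (nhds r_d) ∧ Tendsto θ atTop (nhds (π / 2)) := by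
  have hk0 : 0 < k := (div_pos hV hrd).trans hk
  have hθ0π : ∀ t, tbar ≤ t → θ t ∈ Icc 0 π := fun t ht =>
    Icc_subset_Icc_right (by linarith [pi_pos]) (hθrange t ht)
  have hcos_nonneg : ∀ t, tbar ≤ t → 0 ≤ cos (θ t) := fun t ht =>
    cos_nonneg_of_mem_Icc ⟨by linarith [pi_pos, (hθrange t ht).1], (hθrange t ht).2⟩
  obtain ⟨L, hL⟩ : ∃ L, Tendsto r atTop (𝓝 L) := exists_tendsto_of_hasDerivAt_nonpos hr'
    (fun t ht => by nlinarith [hcos_nonneg t ht]) hr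
  have hcos_lower : ∀ s t, tbar ≤ s → s ≤ t →
      cos (θ s) - (k + V / r_d) * (t - s) ≤ cos (θ t) := fun s t hs hst =>
    cos_sub_mul_le_cos_of_hasDerivAt_le (by positivity) hst
      (fun u hu => hθ0π u (hs.trans hu.1)) (fun u hu => hθ' u (hs.trans hu.1))
      fun u hu => add_le_add (mul_le_of_le_one_right hk0.le (sign_le_one _))
        (mul_sin_div_le_div hV.le hrd (hr u (hs.trans hu.1)))
  have hcos : Tendsto (fun t => cos (θ t)) atTop (𝓝 0) := by
    have := tendsto_zero_of_tendsto_of_hasDerivAt_neg (h := fun t => V * cos (θ t))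
      (K := V * (k + V / r_d)) (by positivity) hL (fun t ht => by simpa using hr' t ht)
      (fun t ht => mul_nonneg hV.le (hcos_nonneg t ht))
      fun s t hs hst => by nlinarith [hcos_lower s t hs hst]
    simpa [hV.ne'] using this.const_mul V⁻¹
  have hθlim : Tendsto θ atTop (𝓝 (π / 2)) :=
    arccos_zero ▸ tendsto_of_tendsto_cos (eventually_atTop.2 ⟨tbar, hθ0π⟩) hcos
  have hLrd : L = r_d := by
    refine le_antisymm (not_lt.1 fun hlt => ?_) (ge_of_tendsto hL (eventually_atTop.2 ⟨tbar, hr⟩))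
    refine not_tendsto_atBot_of_tendsto_nhds hθlim <|
      tendsto_atBot_of_hasDerivAt_le_neg (sub_pos.2 hk) (eventually_atTop.2 ⟨tbar, hθ'⟩) ?_
    filter_upwards [eventually_ge_atTop tbar,
      eventually_sub_sqrt_one_sub_div_sq_neg hrd hlt hL hcos] with t ht hneg
    rw [sign_of_neg hneg]
    linarith [mul_sin_div_le_div (x := θ t) hV.le hrd (hr t ht)]
  exact ⟨hLrd ▸ hL, hθlim⟩
end
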